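/- arXiv:2306.09128 — 7 statements merged into one kernel-verified Lean document; each statement's English description precedes it below -/
import Mathlib

section
/- Let d: V × V → ℝ≥0 be a symmetric function with d(i,i)=0 satisfying the s-relaxed triangle inequality d(i,j) ≤ s·(d(i,k)+d(k,j)) for all i,j,k, for some s ≥ 1. Let π: V → ℝ₊ be a weight function with π(V)=1, and suppose ∑_{i,j∈V} π(i)·π(j)·d(i,j) = 2. Let L ⊆ V with diameter diam(L) := max_{i,j∈L} d(i,j). Then ∑_{i∉L} π(i)·d(i,L) ≥ 1/s² − (1/2)·diam(L), where d(i,L) := min_{j∈L} d(i,j). -/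
/-!
Pick nearest points `a, b ∈ L` of `i, j`. Applying the relaxed triangle inequality through `a`
and then through `b` gives `d(i,j) ≤ s² (d(i,L) + diam L + d(j,L))`. Averaging over `π ⊗ π`
turns the left side into `2` and the right side into `s² (2 ∑ᵢ π i d(i,L) + diam L)`, where
the sum may be restricted to `i ∉ L` because `d(i,L) = 0` on `L`.
-/

open Finset

section

variable {V : Type*}

lemma le_sq_mul_add_add_of_relaxed {d : V → V → ℝ} {s : ℝ} (hs : 1 ≤ s)
    (hdnonneg : ∀ i j, 0 ≤ d i j) (hrelax : ∀ i j k, d i j ≤ s * (d i k + d k j))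
    (i a b j : V) : d i j ≤ s ^ 2 * (d i a + d a b + d b j) := by
  have hs0 : 0 ≤ s := zero_le_one.trans hs
  have hss : s ≤ s ^ 2 := by nlinarith
  calc d i j ≤ s * (d i a + d a j) := hrelax i j a
    _ ≤ s * (d i a + s * (d a b + d b j)) := by gcongr; exact hrelax a j b
    _ = s * d i a + s ^ 2 * (d a b + d b j) := by ring
    _ ≤ s ^ 2 * d i a + s ^ 2 * (d a b + d b j) := by gcongr; exact hdnonneg i a
    _ = s ^ 2 * (d i a + d a b + d b j) := by ring

lemma le_sq_mul_inf'_add_inf'_add_sup' {d : V → V → ℝ} {s : ℝ} (hs : 1 ≤ s)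
    (hdsymm : ∀ i j, d i j = d j i) (hdnonneg : ∀ i j, 0 ≤ d i j)
    (hrelax : ∀ i j k, d i j ≤ s * (d i k + d k j)) {L : Finset V} (hL : L.Nonempty)
    (i j : V) :
    d i j ≤ s ^ 2 * ((L.inf' hL fun k => d i k) + (L.inf' hL fun k => d j k)
      + (L ×ˢ L).sup' (hL.product hL) fun p => d p.1 p.2) := by
  obtain ⟨a, ha, hia⟩ := exists_mem_eq_inf' hL fun k => d i k
  obtain ⟨b, hb, hjb⟩ := exists_mem_eq_inf' hL fun k => d j k
  have hab : d a b ≤ (L ×ˢ L).sup' (hL.product hL) fun p => d p.1 p.2 :=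
    le_sup' (fun p : V × V => d p.1 p.2)
      (show (a, b) ∈ L ×ˢ L from mem_product.mpr ⟨ha, hb⟩)
  calc d i j ≤ s ^ 2 * (d i a + d a b + d b j) :=
        le_sq_mul_add_add_of_relaxed hs hdnonneg hrelax i a b j
    _ ≤ _ := by
        rw [hia, hjb, hdsymm b j]
        gcongr s ^ 2 * ?_
        linarith

lemma inf'_eq_zero_of_mem {d : V → V → ℝ} (hd0 : ∀ i, d i i = 0)
    (hdnonneg : ∀ i j, 0 ≤ d i j) {L : Finset V} (hL : L.Nonempty) {i : V} (hi : i ∈ L) :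
    (L.inf' hL fun j => d i j) = 0 :=
  le_antisymm (hd0 i ▸ inf'_le _ hi) (le_inf' hL _ fun j _ => hdnonneg i j)

lemma sum_sum_mul_mul_add_add [Fintype V] (π g : V → ℝ) (c : ℝ) (hπ1 : ∑ i, π i = 1) :
    ∑ i, ∑ j, π i * π j * (g i + g j + c) = 2 * ∑ i, π i * g i + c := by
  have hrow : ∀ i, ∑ j, π i * π j * (g i + g j + c)
      = π i * g i + π i * ∑ j, π j * g j + π i * c := by
    intro i
    simp only [mul_add, sum_add_distrib, ← sum_mul, ← mul_sum, mul_assoc, hπ1]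
    ring
  simp only [hrow, sum_add_distrib, ← sum_mul, hπ1]
  ring

end

/-- Total distance to core: for a semi-metric `d` satisfying the
`s`-relaxed triangle inequality, a probability weight `π` with
`∑ᵢ∑ⱼ π i π j d i j = 2`, and a nonempty set `L`,
`∑_{i ∉ L} π i · d(i, L) ≥ 1/s² − diam(L)/2`. -/
theorem stmt_1 {V : Type*} [Fintype V] [DecidableEq V]
    (d : V → V → ℝ) (hd0 : ∀ i, d i i = 0) (hdsymm : ∀ i j, d i j = d j i)
    (hdnonneg : ∀ i j, 0 ≤ d i j)
    (s : ℝ) (hs : 1 ≤ s)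
    (hrelax : ∀ i j k, d i j ≤ s * (d i k + d k j))
    (π : V → ℝ) (hπ : ∀ i, 0 < π i) (hπ1 : ∑ i, π i = 1)
    (hsum : ∑ i, ∑ j, π i * π j * d i j = 2)
    (L : Finset V) (hL : L.Nonempty) :
    1 / s ^ 2 - (1 / 2) * ((L ×ˢ L).sup' (hL.product hL) fun p => d p.1 p.2)
      ≤ ∑ i ∈ Lᶜ, π i * (L.inf' hL fun j => d i j) := by
  set D := (L ×ˢ L).sup' (hL.product hL) fun p => d p.1 p.2
  set g : V → ℝ := fun i => L.inf' hL fun j => d i j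
  have hcompl : ∑ i ∈ Lᶜ, π i * g i = ∑ i, π i * g i := by
    rw [← sum_add_sum_compl L, sum_eq_zero (s := L) fun i hi => by
      simp only [g, inf'_eq_zero_of_mem hd0 hdnonneg hL hi, mul_zero], zero_add]
  have hbound : 2 ≤ s ^ 2 * (2 * ∑ i, π i * g i + D) :=
    calc 2 = ∑ i, ∑ j, π i * π j * d i j := hsum.symm
      _ ≤ ∑ i, ∑ j, π i * π j * (s ^ 2 * (g i + g j + D)) := by
          gcongr with i _ j _
          · exact mul_nonneg (hπ i).le (hπ j).le
          · exact le_sq_mul_inf'_add_inf'_add_sup' hs hdsymm hdnonneg hrelax hL i j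
      _ = s ^ 2 * ∑ i, ∑ j, π i * π j * (g i + g j + D) := by
          simp only [mul_sum, mul_left_comm (s ^ 2)]
      _ = s ^ 2 * (2 * ∑ i, π i * g i + D) := by rw [sum_sum_mul_mul_add_add π g D hπ1]
  have hs2 : 0 < s ^ 2 := by positivity
  rw [hcompl, sub_le_iff_le_add, div_le_iff₀ hs2]
  linarith
end

section
/- Let G = (V,E,w) be a directed graph with edge weights w: E → ℝ₊ and vertex weights π: V → ℝ₊. For any nonempty proper subset S ⊂ V, there exist vectors v: V → ℝⁿ satisfying ∑_i π(i)·v_i = 0, ∑_i π(i)·‖v_i‖² = 1, and the ℓ₂² triangle inequalities ‖v_i−v_j‖² + ‖v_j−v_k‖² ≥ ‖v_i−v_k‖² for all i,j,k ∈ V, such that for every circulation F on G with F(e) ≤ w(e) for all edges e, we have ∑_{i<j} (1/2)(F(i,j)+F(j,i))·‖v_i−v_j‖² ≤ 2·φ⃗_π(S), where φ⃗_π(S) = min{w(δ⁺(S)), w(δ⁻(S))} / min{π(S), π(V∖S)}. -/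
/-!
The witness is the one-dimensional cut embedding, equal to `a` on `S` and to `b` off `S`, with
`a, b` chosen so that it is `π`-centred and `π`-normalized; this forces
`(a - b)² = 1 / π(S) + 1 / π(Sᶜ) ≤ 2 / min (π S) (π Sᶜ)`. A two-valued embedding satisfies the
`ℓ₂²` triangle inequalities trivially. Against a circulation only the edges crossing the cut
contribute, and a circulation carries as much flow into `S` as out of it, so the objective is
`F(δ⁻ S) · (a - b)²`, where `F(δ⁻ S) ≤ min (w(δ⁺ S)) (w(δ⁻ S))`.
-/

open Finset

section CutFunction

variable {V : Type*} [DecidableEq V]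

def cutFunction (S : Finset V) (a b : ℝ) (i : V) : ℝ := if i ∈ S then a else b

variable (S : Finset V) (a b : ℝ)

lemma sq_sub_cutFunction_le_add (i j k : V) :
    (cutFunction S a b i - cutFunction S a b k) ^ 2 ≤
      (cutFunction S a b i - cutFunction S a b j) ^ 2 +
        (cutFunction S a b j - cutFunction S a b k) ^ 2 := by
  unfold cutFunction
  split_ifs <;> nlinarith [sq_nonneg (a - b)]

variable [Fintype V]

lemma sum_mul_comp_cutFunction (π : V → ℝ) (h : ℝ → ℝ) :
    ∑ i, π i * h (cutFunction S a b i) = (∑ i ∈ S, π i) * h a + (∑ i ∈ Sᶜ, π i) * h b := by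
  rw [← sum_add_sum_compl S, sum_mul, sum_mul]
  congr 1 <;> refine sum_congr rfl fun i hi => ?_ <;> simp_all [cutFunction]

lemma sum_sum_mul_sq_sub_cutFunction (g : V → V → ℝ) :
    ∑ i, ∑ j, g i j * (cutFunction S a b i - cutFunction S a b j) ^ 2 =
      (a - b) ^ 2 * (∑ i ∈ S, ∑ j ∈ Sᶜ, g i j + ∑ i ∈ Sᶜ, ∑ j ∈ S, g i j) := by
  rw [← sum_add_sum_compl S, mul_add, mul_sum, mul_sum]
  congr 1 <;> refine sum_congr rfl fun i hi => ?_ <;> rw [← sum_add_sum_compl S, mul_sum]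
  · rw [sum_eq_zero fun j hj => by simp [cutFunction, hi, hj], zero_add]
    exact sum_congr rfl fun j hj => by simp_all [cutFunction, mul_comm]
  · rw [sum_eq_zero (s := Sᶜ) fun j hj => by simp_all [cutFunction], add_zero]
    exact sum_congr rfl fun j hj => by simp [cutFunction, mem_compl.mp hi, hj]; ring

end CutFunction

lemma sum_sum_add_swap_mul_of_symm {V R : Type*} [Fintype V] [CommSemiring R] (g x : V → V → R)
    (hx : ∀ i j, x i j = x j i) :
    ∑ i, ∑ j, (g i j + g j i) * x i j = 2 * ∑ i, ∑ j, g i j * x i j := by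
  simp only [add_mul, sum_add_distrib]
  rw [sum_comm (f := fun i j => g j i * x i j)]
  simp only [hx]
  ring

lemma sum_compl_eq_sum_compl_of_circulation {V M : Type*} [Fintype V] [DecidableEq V]
    [AddCommGroup M] (F : V → V → M) (hF : ∀ i, ∑ j, F i j = ∑ j, F j i) (S : Finset V) :
    ∑ i ∈ S, ∑ j ∈ Sᶜ, F i j = ∑ i ∈ Sᶜ, ∑ j ∈ S, F i j := by
  have h := sum_congr rfl fun i (_ : i ∈ S) => hF i
  simp only [← sum_add_sum_compl S, sum_add_distrib] at h
  rw [sum_comm (s := S) (t := S) (f := fun i j => F j i),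
    sum_comm (s := S) (t := Sᶜ) (f := fun i j => F j i)] at h
  exact add_left_cancel h

lemma exists_centered_normalized_pair (P Q : ℝ) (hP : 0 < P) (hQ : 0 < Q) :
    ∃ a b : ℝ, P * a + Q * b = 0 ∧ P * a ^ 2 + Q * b ^ 2 = 1 ∧
      (a - b) ^ 2 = (P + Q) / (P * Q) := by
  obtain ⟨s, hs, hs2⟩ : ∃ s : ℝ, 0 < s ∧ s ^ 2 = P * Q * (P + Q) :=
    ⟨√(P * Q * (P + Q)), by positivity, Real.sq_sqrt (by positivity)⟩
  refine ⟨Q / s, -(P / s), ?_, ?_, ?_⟩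
  · field_simp; ring
  · field_simp; rw [hs2]; ring
  · field_simp; rw [hs2]; ring

lemma add_div_mul_le_two_div_min {P Q : ℝ} (hP : 0 < P) (hQ : 0 < Q) :
    (P + Q) / (P * Q) ≤ 2 / min P Q := by
  have hm : 0 < min P Q := lt_min hP hQ
  calc (P + Q) / (P * Q) = 1 / Q + 1 / P := by field_simp
    _ ≤ 1 / min P Q + 1 / min P Q := by
      gcongr
      exacts [min_le_right P Q, min_le_left P Q]
    _ = 2 / min P Q := by ring

lemma norm_smul_sub_smul_sq {E : Type*} [NormedAddCommGroup E] [NormedSpace ℝ E] {e : E}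
    (he : ‖e‖ = 1) (x y : ℝ) : ‖x • e - y • e‖ ^ 2 = (x - y) ^ 2 := by
  rw [← sub_smul, norm_smul, he, mul_one, Real.norm_eq_abs, sq_abs]

lemma circulation_energy_cutFunction_le {V : Type*} [Fintype V] [DecidableEq V]
    (S : Finset V) (π : V → ℝ) (hP : 0 < ∑ i ∈ S, π i) (hQ : 0 < ∑ i ∈ Sᶜ, π i)
    {a b : ℝ} (hgap : (a - b) ^ 2 = (∑ i ∈ S, π i + ∑ i ∈ Sᶜ, π i) /
      ((∑ i ∈ S, π i) * ∑ i ∈ Sᶜ, π i))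
    (w F : V → V → ℝ) (hF0 : ∀ i j, 0 ≤ F i j) (hFw : ∀ i j, F i j ≤ w i j)
    (hF : ∀ i, ∑ j, F i j = ∑ j, F j i) :
    (1 / 4) * ∑ i, ∑ j, (F i j + F j i) * (cutFunction S a b i - cutFunction S a b j) ^ 2 ≤
      2 * (min (∑ i ∈ S, ∑ j ∈ Sᶜ, w i j) (∑ i ∈ Sᶜ, ∑ j ∈ S, w i j) /
        min (∑ i ∈ S, π i) (∑ i ∈ Sᶜ, π i)) := by
  set P := ∑ i ∈ S, π i
  set Q := ∑ i ∈ Sᶜ, π i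
  set W := min (∑ i ∈ S, ∑ j ∈ Sᶜ, w i j) (∑ i ∈ Sᶜ, ∑ j ∈ S, w i j)
  set inflow := ∑ i ∈ Sᶜ, ∑ j ∈ S, F i j
  have hinflow : inflow ≤ W := le_min
    ((sum_compl_eq_sum_compl_of_circulation F hF S).symm.trans_le <|
      sum_le_sum fun i _ => sum_le_sum fun j _ => hFw i j)
    (sum_le_sum fun i _ => sum_le_sum fun j _ => hFw i j)
  calc (1 / 4) * ∑ i, ∑ j, (F i j + F j i) * (cutFunction S a b i - cutFunction S a b j) ^ 2
      = inflow * ((P + Q) / (P * Q)) := by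
        rw [sum_sum_add_swap_mul_of_symm F _ fun i j => by ring,
          sum_sum_mul_sq_sub_cutFunction, sum_compl_eq_sum_compl_of_circulation F hF S, hgap]
        ring
    _ ≤ W * (2 / min P Q) :=
        mul_le_mul hinflow (add_div_mul_le_two_div_min hP hQ) (by positivity)
          ((sum_nonneg fun i _ => sum_nonneg fun j _ => hF0 i j).trans hinflow)
    _ = 2 * (W / min P Q) := by ring

theorem stmt_2_general {V : Type*} [Fintype V] [DecidableEq V]
    (w : V → V → ℝ)
    (π : V → ℝ) (hπ : ∀ i, 0 < π i)
    (S : Finset V) (hS : S.Nonempty) (hS' : S ≠ Finset.univ) :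
    ∃ (m : ℕ) (v : V → EuclideanSpace ℝ (Fin m)),
      (∑ i, π i • v i = 0) ∧
      (∑ i, π i * ‖v i‖ ^ 2 = 1) ∧
      (∀ i j k, ‖v i - v k‖ ^ 2 ≤ ‖v i - v j‖ ^ 2 + ‖v j - v k‖ ^ 2) ∧
      ∀ F : V → V → ℝ,
        (∀ i j, 0 ≤ F i j) →
        (∀ i j, F i j ≤ w i j) →
        (∀ i, ∑ j, F i j = ∑ j, F j i) →
        (1 / 4) * ∑ i, ∑ j, (F i j + F j i) * ‖v i - v j‖ ^ 2 ≤
          2 * (min (∑ i ∈ S, ∑ j ∈ Sᶜ, w i j) (∑ i ∈ Sᶜ, ∑ j ∈ S, w i j) /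
            min (∑ i ∈ S, π i) (∑ i ∈ Sᶜ, π i)) := by
  have hP : 0 < ∑ i ∈ S, π i := sum_pos (fun i _ => hπ i) hS
  have hQ : 0 < ∑ i ∈ Sᶜ, π i :=
    sum_pos (fun i _ => hπ i) (by rwa [← compl_ne_univ_iff_nonempty, compl_compl])
  obtain ⟨a, b, hmean, hvar, hgap⟩ := exists_centered_normalized_pair _ _ hP hQ
  set f := cutFunction S a b
  set e : EuclideanSpace ℝ (Fin 1) := EuclideanSpace.single 0 1
  have he : ‖e‖ = 1 := by simp [e]
  have hdist (i j : V) : ‖f i • e - f j • e‖ ^ 2 = (f i - f j) ^ 2 := norm_smul_sub_smul_sq he _ _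
  refine ⟨1, fun i => f i • e, ?_, ?_, ?_, ?_⟩
  · simp only [smul_smul, ← sum_smul]
    rw [show ∑ i, π i * f i = 0 from (sum_mul_comp_cutFunction S a b π id).trans hmean, zero_smul]
  · simp only [norm_smul, he, mul_one, Real.norm_eq_abs, sq_abs]
    exact (sum_mul_comp_cutFunction S a b π (· ^ 2)).trans hvar
  · intro i j k
    simp only [hdist]
    exact sq_sub_cutFunction_le_add S a b i j k
  · intro F hF0 hFw hF
    simp only [hdist]
    exact circulation_energy_cutFunction_le S π hP hQ hgap w F hF0 hFw hF

/-- Easy direction of the SDP relaxation: for any nonempty proper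
`S ⊂ V` of a weighted directed graph, there is a feasible embedding for the
`λ^Δ_π` program whose objective value against every feasible circulation is at
most `2 φ⃗_π(S)`. -/
theorem stmt_2 {V : Type*} [Fintype V] [DecidableEq V]
    (w : V → V → ℝ) (hw : ∀ i j, 0 ≤ w i j)
    (π : V → ℝ) (hπ : ∀ i, 0 < π i)
    (S : Finset V) (hS : S.Nonempty) (hS' : S ≠ Finset.univ) :
    ∃ (m : ℕ) (v : V → EuclideanSpace ℝ (Fin m)),
      (∑ i, π i • v i = 0) ∧
      (∑ i, π i * ‖v i‖ ^ 2 = 1) ∧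
      (∀ i j k, ‖v i - v k‖ ^ 2 ≤ ‖v i - v j‖ ^ 2 + ‖v j - v k‖ ^ 2) ∧
      ∀ F : V → V → ℝ,
        (∀ i j, 0 ≤ F i j) →
        (∀ i j, F i j ≤ w i j) →
        (∀ i, ∑ j, F i j = ∑ j, F j i) →
        (1 / 4) * ∑ i, ∑ j, (F i j + F j i) * ‖v i - v j‖ ^ 2 ≤
          2 * (min (∑ i ∈ S, ∑ j ∈ Sᶜ, w i j) (∑ i ∈ Sᶜ, ∑ j ∈ S, w i j) /
            min (∑ i ∈ S, π i) (∑ i ∈ Sᶜ, π i)) :=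
  stmt_2_general w π hπ S hS hS'
end

section
/- Let G be an undirected graph with capacity function w on edges, and suppose f is a feasible multi-commodity flow in G with demand graph D, i.e., f assigns values f_p ≥ 0 to paths in G such that ∑_{p ∋ e} f_p ≤ w_e for every edge e, and for each pair (i,j) the total flow on paths from i to j equals D(i,j). Let F be the graph with F(i,j) = ∑_{p ∋ ij} f_p, and for a path p = (i_1,…,i_ℓ) define T_p = ∑_{k=1}^{ℓ−1} L_{i_k,i_{k+1}} − L_{i_1,i_ℓ}, where L_{i,j} is the Laplacian of edge ij. Then ∑_p f_p T_p = L(F) − L(D), and consequently λ₂(L(D)) ≤ λ₂(L(G) − ∑_p f_p T_p). -/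
open Matrix

/-- Laplacian of the single (undirected) edge `ij`: `(e_i − e_j)(e_i − e_j)ᵀ`. -/
noncomputable def edgeLap {V : Type*} [Fintype V] [DecidableEq V] (i j : V) :
    Matrix V V ℝ :=
  Matrix.vecMulVec (Pi.single i 1 - Pi.single j 1) (Pi.single i 1 - Pi.single j 1)

/-- Laplacian of a path, given as the list of its vertices. -/
noncomputable def pathLap {V : Type*} [Fintype V] [DecidableEq V] (l : List V) :
    Matrix V V ℝ :=
  ((l.zip l.tail).map fun q => edgeLap q.1 q.2).sum

/-- `T_p = ∑_k L_{i_k, i_{k+1}} − L_{i_1, i_ℓ}` for a path `p = (i_1, …, i_ℓ)`. -/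
noncomputable def Tpath {V : Type*} [Fintype V] [DecidableEq V] [Inhabited V]
    (l : List V) : Matrix V V ℝ :=
  pathLap l - edgeLap l.headI l.getLastI

/-- Number of times the path `l` uses the directed edge `(i, j)`. -/
def pairCount {V : Type*} [DecidableEq V] (l : List V) (i j : V) : ℕ :=
  (l.zip l.tail).count (i, j)

/-- Second smallest eigenvalue (with multiplicity) of a symmetric matrix. -/
noncomputable def lambda2 {n : ℕ} (M : Matrix (Fin (n + 2)) (Fin (n + 2)) ℝ) : ℝ :=
  if h : M.IsHermitian then (h.eigenvalues ∘ (Tuple.sort h.eigenvalues)) 1 else 0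

/-!
Each path `p = (i₁, …, i_ℓ)` carrying flow `f_p` contributes `f_p ∑ₖ L_{iₖ,iₖ₊₁}` to `L(F)` and
`f_p L_{i₁,i_ℓ}` to `L(D)`, so the identity is linearity of the Laplacian in the edge weights.
For the eigenvalue bound, the right-hand matrix is `L(D) + (L(G) − L(F))`, and feasibility makes
`L(G) − L(F)` positive semidefinite. Finally `λ₂` is monotone in the Loewner order: if `A ⪯ B`,
some nonzero `x` in the span of the two lowest eigenvectors of `B` is orthogonal to the lowest
eigenvector of `A`, whence `λ₂(A) ‖x‖² ≤ xᵀAx ≤ xᵀBx ≤ λ₂(B) ‖x‖²`.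
-/

namespace Matrix.IsHermitian

variable {ι : Type*} [Fintype ι] [DecidableEq ι] {A : Matrix ι ι ℝ} (hA : A.IsHermitian)

lemma eigenvectorBasis_dotProduct (i j : ι) :
    ⇑(hA.eigenvectorBasis i) ⬝ᵥ ⇑(hA.eigenvectorBasis j) = if i = j then 1 else 0 := by
  simpa [EuclideanSpace.inner_eq_star_dotProduct, dotProduct_comm] using
    orthonormal_iff_ite.mp hA.eigenvectorBasis.orthonormal i j

lemma sum_dotProduct_smul_eigenvectorBasis (x : ι → ℝ) :
    ∑ k, (⇑(hA.eigenvectorBasis k) ⬝ᵥ x) • ⇑(hA.eigenvectorBasis k) = x := by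
  simpa [EuclideanSpace.inner_eq_star_dotProduct, dotProduct_comm] using
    congrArg WithLp.ofLp (hA.eigenvectorBasis.sum_repr' (WithLp.toLp 2 x))

lemma dotProduct_self_eq_sum (x : ι → ℝ) :
    x ⬝ᵥ x = ∑ k, (⇑(hA.eigenvectorBasis k) ⬝ᵥ x) ^ 2 := by
  conv_lhs => arg 2; rw [← hA.sum_dotProduct_smul_eigenvectorBasis x]
  rw [dotProduct_sum]
  exact Finset.sum_congr rfl fun k _ => by rw [dotProduct_smul, smul_eq_mul, dotProduct_comm, sq]

lemma dotProduct_mulVec_eq_sum (x : ι → ℝ) :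
    x ⬝ᵥ A *ᵥ x = ∑ k, hA.eigenvalues k * (⇑(hA.eigenvectorBasis k) ⬝ᵥ x) ^ 2 := by
  conv_lhs => arg 2; rw [← hA.sum_dotProduct_smul_eigenvectorBasis x]
  rw [mulVec_sum, dotProduct_sum]
  refine Finset.sum_congr rfl fun k _ => ?_
  rw [mulVec_smul, hA.mulVec_eigenvectorBasis, dotProduct_smul, dotProduct_smul, smul_eq_mul,
    smul_eq_mul, dotProduct_comm x]
  ring

lemma mul_dotProduct_self_le_dotProduct_mulVec {μ : ℝ} {x : ι → ℝ}
    (h : ∀ k, ⇑(hA.eigenvectorBasis k) ⬝ᵥ x ≠ 0 → μ ≤ hA.eigenvalues k) :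
    μ * (x ⬝ᵥ x) ≤ x ⬝ᵥ A *ᵥ x := by
  rw [hA.dotProduct_self_eq_sum, hA.dotProduct_mulVec_eq_sum, Finset.mul_sum]
  refine Finset.sum_le_sum fun k _ => ?_
  by_cases hk : ⇑(hA.eigenvectorBasis k) ⬝ᵥ x = 0
  · simp [hk]
  · exact mul_le_mul_of_nonneg_right (h k hk) (sq_nonneg _)

lemma dotProduct_mulVec_le_mul_dotProduct_self {μ : ℝ} {x : ι → ℝ}
    (h : ∀ k, ⇑(hA.eigenvectorBasis k) ⬝ᵥ x ≠ 0 → hA.eigenvalues k ≤ μ) :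
    x ⬝ᵥ A *ᵥ x ≤ μ * (x ⬝ᵥ x) := by
  rw [hA.dotProduct_self_eq_sum, hA.dotProduct_mulVec_eq_sum, Finset.mul_sum]
  refine Finset.sum_le_sum fun k _ => ?_
  by_cases hk : ⇑(hA.eigenvectorBasis k) ⬝ᵥ x = 0
  · simp [hk]
  · exact mul_le_mul_of_nonneg_right (h k hk) (sq_nonneg _)

lemma eigenvectorBasis_dotProduct_smul_add_smul (i j k : ι) (a c : ℝ) :
    ⇑(hA.eigenvectorBasis k) ⬝ᵥ (a • ⇑(hA.eigenvectorBasis i) + c • ⇑(hA.eigenvectorBasis j)) =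
      (if k = i then a else 0) + (if k = j then c else 0) := by
  simp [dotProduct_add, dotProduct_smul, hA.eigenvectorBasis_dotProduct]

end Matrix.IsHermitian

lemma exists_sq_add_sq_pos_mul_add_mul_eq_zero (p q : ℝ) :
    ∃ a c : ℝ, 0 < a ^ 2 + c ^ 2 ∧ a * p + c * q = 0 := by
  by_cases hp : p = 0
  · exact ⟨1, 0, by norm_num, by simp [hp]⟩
  · exact ⟨-q, p, by positivity, by ring⟩

section lambda2

variable {n : ℕ} {A : Matrix (Fin (n + 2)) (Fin (n + 2)) ℝ} (hA : A.IsHermitian)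
include hA

lemma lambda2_eq : lambda2 A = hA.eigenvalues (Tuple.sort hA.eigenvalues 1) := by
  rw [lambda2, dif_pos hA, Function.comp_apply]

lemma lambda2_mul_le_dotProduct_mulVec {x : Fin (n + 2) → ℝ}
    (hx : ⇑(hA.eigenvectorBasis (Tuple.sort hA.eigenvalues 0)) ⬝ᵥ x = 0) :
    lambda2 A * (x ⬝ᵥ x) ≤ x ⬝ᵥ A *ᵥ x := by
  refine hA.mul_dotProduct_self_le_dotProduct_mulVec fun k hk => ?_
  obtain ⟨j, rfl⟩ := (Tuple.sort hA.eigenvalues).surjective k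
  have hj : j ≠ 0 := by rintro rfl; exact hk hx
  rw [lambda2_eq hA]
  exact Tuple.monotone_sort hA.eigenvalues (show 1 ≤ j from Fin.pos_iff_ne_zero.mpr hj)

lemma dotProduct_mulVec_le_lambda2_mul {x : Fin (n + 2) → ℝ} {a c : ℝ}
    (hx : x = a • ⇑(hA.eigenvectorBasis (Tuple.sort hA.eigenvalues 0)) +
      c • ⇑(hA.eigenvectorBasis (Tuple.sort hA.eigenvalues 1))) :
    x ⬝ᵥ A *ᵥ x ≤ lambda2 A * (x ⬝ᵥ x) := by
  refine hA.dotProduct_mulVec_le_mul_dotProduct_self fun k hk => ?_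
  rw [hx, hA.eigenvectorBasis_dotProduct_smul_add_smul] at hk
  obtain ⟨j, rfl⟩ := (Tuple.sort hA.eigenvalues).surjective k
  have hj : j ≤ 1 := by
    by_contra! hj
    simp [hj.ne', (hj.trans' Fin.zero_lt_one).ne'] at hk
  rw [lambda2_eq hA]
  exact Tuple.monotone_sort hA.eigenvalues hj

end lambda2

open scoped MatrixOrder in
theorem lambda2_monotone {n : ℕ} : Monotone (lambda2 (n := n)) := by
  intro A B hAB
  by_cases hA : A.IsHermitian
  swap
  -- `lambda2` is `0` off Hermitian matrices, and `B - A` is Hermitian.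
  · have hB : ¬ B.IsHermitian := fun hB => hA (by simpa using hB.sub hAB.isHermitian)
    rw [lambda2, lambda2, dif_neg hA, dif_neg hB]
  have hB : B.IsHermitian := by simpa using hA.add hAB.isHermitian
  set τ := Tuple.sort hB.eigenvalues
  obtain ⟨a, c, hac, horth⟩ := exists_sq_add_sq_pos_mul_add_mul_eq_zero
    (⇑(hA.eigenvectorBasis (Tuple.sort hA.eigenvalues 0)) ⬝ᵥ ⇑(hB.eigenvectorBasis (τ 0)))
    (⇑(hA.eigenvectorBasis (Tuple.sort hA.eigenvalues 0)) ⬝ᵥ ⇑(hB.eigenvectorBasis (τ 1)))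
  set x := a • ⇑(hB.eigenvectorBasis (τ 0)) + c • ⇑(hB.eigenvectorBasis (τ 1))
  have hxx : x ⬝ᵥ x = a ^ 2 + c ^ 2 := by
    have h01 : τ 0 ≠ τ 1 := τ.injective.ne (by simp)
    simp only [x, dotProduct_add, add_dotProduct, dotProduct_smul, smul_dotProduct,
      hB.eigenvectorBasis_dotProduct, h01, h01.symm, ↓reduceIte, smul_eq_mul, mul_one, mul_zero,
      add_zero, zero_add]
    ring
  have hAx := lambda2_mul_le_dotProduct_mulVec hA (x := x) (by
    simpa [x, dotProduct_add, dotProduct_smul] using horth)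
  have hBx := dotProduct_mulVec_le_lambda2_mul hB (x := x) rfl
  have hABx : x ⬝ᵥ A *ᵥ x ≤ x ⬝ᵥ B *ᵥ x := by
    have := hAB.dotProduct_mulVec_nonneg x
    simpa [sub_mulVec, dotProduct_sub] using this
  rw [hxx] at hAx hBx
  exact le_of_mul_le_mul_right (hAx.trans (hABx.trans hBx)) hac

section weightedLap

open scoped MatrixOrder

variable {V : Type*} [Fintype V] [DecidableEq V]

/-- Sums over ordered pairs, so a symmetric `c` counts each edge twice. -/
noncomputable def weightedLap : (V → V → ℝ) →ₗ[ℝ] Matrix V V ℝ where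
  toFun c := ∑ i, ∑ j, c i j • edgeLap i j
  map_add' c d := by simp only [Pi.add_apply, add_smul, Finset.sum_add_distrib]
  map_smul' a c := by simp only [Pi.smul_apply, smul_eq_mul, mul_smul, Finset.smul_sum,
    RingHom.id_apply]

lemma weightedLap_apply (c : V → V → ℝ) :
    weightedLap c = ∑ i, ∑ j, c i j • edgeLap i j := rfl

lemma weightedLap_indicator (a b : V) :
    weightedLap (fun i j => if a = i ∧ b = j then 1 else 0) = edgeLap a b := by
  simp [weightedLap_apply, ite_and]

lemma edgeLap_comm (i j : V) : edgeLap i j = edgeLap j i := by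
  rw [edgeLap, edgeLap, ← neg_sub, vecMulVec_neg, neg_vecMulVec, neg_neg]

lemma weightedLap_swap (c : V → V → ℝ) : weightedLap (fun i j => c j i) = weightedLap c := by
  rw [weightedLap_apply, weightedLap_apply, Finset.sum_comm]
  simp_rw [edgeLap_comm]

lemma edgeLap_posSemidef (i j : V) : (edgeLap i j).PosSemidef := by
  simpa [edgeLap] using posSemidef_vecMulVec_self_star (Pi.single i 1 - Pi.single j 1 : V → ℝ)

lemma weightedLap_monotone : Monotone (weightedLap (V := V)) := by
  intro c d hcd
  rw [Matrix.le_iff, ← map_sub, weightedLap_apply]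
  exact posSemidef_sum _ fun i _ => posSemidef_sum _ fun j _ =>
    (edgeLap_posSemidef i j).smul (sub_nonneg.mpr (hcd i j))

lemma weightedLap_le_half_smul {c w : V → V → ℝ}
    (h : ∀ i j, c i j + c j i ≤ w i j) : weightedLap c ≤ (1 / 2 : ℝ) • weightedLap w := by
  calc weightedLap c = weightedLap ((1 / 2 : ℝ) • (c + fun i j => c j i)) := by
        rw [map_smul, map_add, weightedLap_swap, ← two_smul ℝ, smul_smul]
        norm_num
    _ ≤ weightedLap ((1 / 2 : ℝ) • w) := weightedLap_monotone fun i j =>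
        mul_le_mul_of_nonneg_left (h i j) (by norm_num)
    _ = (1 / 2 : ℝ) • weightedLap w := map_smul _ _ _

lemma list_sum_map_edgeLap (L : List (V × V)) :
    (L.map fun q => edgeLap q.1 q.2).sum = weightedLap (fun i j => (L.count (i, j) : ℝ)) := by
  induction L with
  | nil =>
    simp only [List.map_nil, List.sum_nil, List.count_nil, Nat.cast_zero]
    exact (map_zero weightedLap).symm
  | cons a L ih =>
    have hcount : (fun i j => ((a :: L).count (i, j) : ℝ)) =
        (fun i j => (L.count (i, j) : ℝ)) + fun i j => if a.1 = i ∧ a.2 = j then 1 else 0 := by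
      ext i j
      simp [List.count_cons, Prod.ext_iff]
    rw [List.map_cons, List.sum_cons, ih, hcount, map_add, weightedLap_indicator, add_comm]

lemma pathLap_eq_weightedLap (l : List V) :
    pathLap l = weightedLap (fun i j => (pairCount l i j : ℝ)) :=
  list_sum_map_edgeLap _

end weightedLap

section flow

variable {V : Type*} [Fintype V] [DecidableEq V] {P : Type*} [Fintype P]
  (vert : P → List V) (f : P → ℝ)

lemma sum_smul_pathLap {F : V → V → ℝ}
    (hF : ∀ i j, F i j = ∑ p, f p * pairCount (vert p) i j) :
    ∑ p, f p • pathLap (vert p) = weightedLap F := by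
  have : F = ∑ p, f p • fun i j => (pairCount (vert p) i j : ℝ) := by
    ext i j
    simp [hF, Finset.sum_apply]
  simp [this, pathLap_eq_weightedLap]

lemma sum_smul_edgeLap_headI_getLastI [Inhabited V] {D : V → V → ℝ}
    (hD : ∀ i j, D i j = ∑ p ∈ Finset.univ.filter
        (fun p => (vert p).headI = i ∧ (vert p).getLastI = j), f p) :
    ∑ p, f p • edgeLap (vert p).headI (vert p).getLastI = weightedLap D := by
  have : D = ∑ p, f p •
      fun i j => if (vert p).headI = i ∧ (vert p).getLastI = j then (1 : ℝ) else 0 := by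
    ext i j
    simp [hD, Finset.sum_apply, Finset.sum_filter]
  simp [this, weightedLap_indicator]

lemma sum_smul_Tpath [Inhabited V] {F D : V → V → ℝ}
    (hF : ∀ i j, F i j = ∑ p, f p * pairCount (vert p) i j)
    (hD : ∀ i j, D i j = ∑ p ∈ Finset.univ.filter
        (fun p => (vert p).headI = i ∧ (vert p).getLastI = j), f p) :
    ∑ p, f p • Tpath (vert p) = weightedLap F - weightedLap D := by
  simp only [Tpath, smul_sub, Finset.sum_sub_distrib, sum_smul_pathLap vert f hF,
    sum_smul_edgeLap_headI_getLastI vert f hD]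

end flow

theorem stmt_4_general {n : ℕ}
    (w : Fin (n + 2) → Fin (n + 2) → ℝ)
    {P : Type*} [Fintype P]
    (vert : P → List (Fin (n + 2)))
    (f : P → ℝ)
    (F D : Fin (n + 2) → Fin (n + 2) → ℝ)
    (hF : ∀ i j, F i j = ∑ p, f p * pairCount (vert p) i j)
    (hD : ∀ i j, D i j = ∑ p ∈ Finset.univ.filter
        (fun p => (vert p).headI = i ∧ (vert p).getLastI = j), f p)
    (hcap : ∀ i j, F i j + F j i ≤ w i j) :
    (∑ p, f p • Tpath (vert p)) =
      (∑ i, ∑ j, F i j • edgeLap i j) - (∑ i, ∑ j, D i j • edgeLap i j) ∧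
    lambda2 (∑ i, ∑ j, D i j • edgeLap i j) ≤
      lambda2 ((1 / 2 : ℝ) • (∑ i, ∑ j, w i j • edgeLap i j) -
        ∑ p, f p • Tpath (vert p)) := by
  have hT := sum_smul_Tpath vert f hF hD
  have hFw := weightedLap_le_half_smul hcap
  refine ⟨hT, lambda2_monotone (Matrix.le_iff.mpr ?_)⟩
  change ((1 / 2 : ℝ) • weightedLap w - ∑ p, f p • Tpath (vert p) - weightedLap D).PosSemidef
  rw [hT]
  simpa only [sub_sub, sub_add_cancel] using Matrix.le_iff.mp hFw

/-- for a feasible multi-commodity flow `f` with flow graph `F` and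
demand graph `D` in an undirected capacitated graph `G` (given by a symmetric
weight function `w`), `∑_p f_p T_p = L(F) − L(D)`, and consequently
`λ₂(L(D)) ≤ λ₂(L(G) − ∑_p f_p T_p)`. -/
theorem stmt_4 {n : ℕ}
    (w : Fin (n + 2) → Fin (n + 2) → ℝ) (hw0 : ∀ i j, 0 ≤ w i j)
    (hwsymm : ∀ i j, w i j = w j i)
    {P : Type*} [Fintype P]
    (vert : P → List (Fin (n + 2)))
    (hlen : ∀ p, 2 ≤ (vert p).length)
    (hpath : ∀ p, (vert p).Chain' fun a b => 0 < w a b)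
    (f : P → ℝ) (hf : ∀ p, 0 ≤ f p)
    (F D : Fin (n + 2) → Fin (n + 2) → ℝ)
    (hF : ∀ i j, F i j = ∑ p, f p * pairCount (vert p) i j)
    (hD : ∀ i j, D i j = ∑ p ∈ Finset.univ.filter
        (fun p => (vert p).headI = i ∧ (vert p).getLastI = j), f p)
    (hcap : ∀ i j, F i j + F j i ≤ w i j) :
    (∑ p, f p • Tpath (vert p)) =
      (∑ i, ∑ j, F i j • edgeLap i j) - (∑ i, ∑ j, D i j • edgeLap i j) ∧
    lambda2 (∑ i, ∑ j, D i j • edgeLap i j) ≤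
      lambda2 ((1 / 2 : ℝ) • (∑ i, ∑ j, w i j • edgeLap i j) -
        ∑ p, f p • Tpath (vert p)) :=
  stmt_4_general w vert f F D hF hD hcap
end

section
/- (Unsaturated case / flow-cut lemma) In the bidirectional max-flow setup on a directed graph G with edge weights w, vertex weights π, disjoint sets L, R with r = π(R)/π(L), source edges from s to each i ∈ L of capacity r·β·π(i), sink edges from each j ∈ R to t of capacity β·π(j), and internal edge capacities scaled by κ: if the maximum s-t flow value is strictly less than β·π(R), then the set S of vertices reachable from s after removing a minimum cut satisfies φ⃗_π(S) := w(δ⁺(S))/min{π(S), π(V∖S)} ≤ β·max{1,r}/κ. -/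
/-!
Let `a = π(S)`, `b = π(Sᶜ)` and `W = w(δ⁺(S))`. Every source edge into `L ∖ V_s` and every sink
edge out of `R ∖ V_t` survives the cut, so `π(L) ≤ π(V_s) + a` and `π(R) ≤ π(V_t) + b`. Since
the full source and sink capacities are both `β·π(R) = r·β·π(L)`, the cut inequality leaves
`κ·W ≤ r·β·a` and `κ·W ≤ β·b`, hence `κ·W ≤ β·max(1, r)·min(a, b)`.
-/

open Finset

theorem Finset.sum_le_sum_add_sum_of_sdiff_subset {ι M : Type*} [DecidableEq ι]
    [AddCommMonoid M] [PartialOrder M] [IsOrderedAddMonoid M] {f : ι → M}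
    (hf : ∀ i, 0 ≤ f i) {s t u : Finset ι} (h : s \ t ⊆ u) :
    ∑ i ∈ s, f i ≤ ∑ i ∈ t, f i + ∑ i ∈ u, f i := by
  rw [← sum_inter_add_sum_sdiff s t f]
  exact add_le_add (sum_le_sum_of_subset_of_nonneg inter_subset_right fun i _ _ => hf i)
    (sum_le_sum_of_subset_of_nonneg h fun i _ _ => hf i)

theorem le_max_one_mul_min {α : Type*} [Semiring α] [LinearOrder α] [IsOrderedRing α]
    {c r a b : α} (ha : 0 ≤ a) (hb : 0 ≤ b) (hca : c ≤ r * a) (hcb : c ≤ b) :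
    c ≤ max 1 r * min a b := by
  rcases min_cases a b with ⟨h, -⟩ | ⟨h, -⟩ <;> rw [h]
  · exact hca.trans (mul_le_mul_of_nonneg_right (le_max_right 1 r) ha)
  · exact hcb.trans (le_mul_of_one_le_left hb (le_max_left 1 r))

theorem stmt_12_general {V : Type*} [Fintype V] [DecidableEq V]
    (w : V → V → ℝ)
    (π : V → ℝ) (hπ : ∀ i, 0 < π i)
    (L R : Finset V) (hL : L.Nonempty)
    (β κ : ℝ) (hβ : 0 < β) (hκ : 0 < κ)
    (r : ℝ) (hr : r = (∑ j ∈ R, π j) / (∑ i ∈ L, π i))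
    (Vs : Finset V) (Vt : Finset V)
    (S : Finset V)
    (hcut : r * β * (∑ i ∈ Vs, π i) + β * (∑ j ∈ Vt, π j) +
        κ * (∑ i ∈ S, ∑ j ∈ Sᶜ, w i j) < β * ∑ j ∈ R, π j)
    (hSL : L \ Vs ⊆ S) (hSR : R \ Vt ⊆ Sᶜ) :
    (∑ i ∈ S, ∑ j ∈ Sᶜ, w i j) / min (∑ i ∈ S, π i) (∑ i ∈ Sᶜ, π i)
      ≤ β * max 1 r / κ := by
  set W := ∑ i ∈ S, ∑ j ∈ Sᶜ, w i j
  have hπ₀ : ∀ i, 0 ≤ π i := fun i => (hπ i).le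
  have hmass : ∀ s : Finset V, 0 ≤ ∑ i ∈ s, π i := fun s => sum_nonneg fun i _ => hπ₀ i
  have hr₀ : 0 ≤ r := hr ▸ div_nonneg (hmass R) (hmass L)
  have hrL : r * β * ∑ i ∈ L, π i = β * ∑ j ∈ R, π j := by
    rw [hr]; field_simp [(sum_pos (fun i _ => hπ i) hL).ne']
  have hL_le := sum_le_sum_add_sum_of_sdiff_subset hπ₀ hSL
  have hR_le := sum_le_sum_add_sum_of_sdiff_subset hπ₀ hSR
  have hVs₀ : 0 ≤ r * β * ∑ i ∈ Vs, π i := mul_nonneg (mul_nonneg hr₀ hβ.le) (hmass Vs)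
  have hVt₀ : 0 ≤ β * ∑ j ∈ Vt, π j := mul_nonneg hβ.le (hmass Vt)
  have hWS : κ * W ≤ r * (β * ∑ i ∈ S, π i) := by
    linarith [mul_le_mul_of_nonneg_left hL_le (mul_nonneg hr₀ hβ.le)]
  have hWSc : κ * W ≤ β * ∑ i ∈ Sᶜ, π i := by
    linarith [mul_le_mul_of_nonneg_left hR_le hβ.le]
  have hmin := le_max_one_mul_min (mul_nonneg hβ.le (hmass S))
    (mul_nonneg hβ.le (hmass Sᶜ)) hWS hWSc
  rw [← mul_min_of_nonneg _ _ hβ.le] at hmin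
  -- `div_le_of_le_mul₀` also covers `min = 0`, where the quotient is the junk value `0`.
  refine div_le_of_le_mul₀ (le_min (hmass S) (hmass Sᶜ))
    (div_nonneg (mul_nonneg hβ.le (hr₀.trans (le_max_right 1 r))) hκ.le) ?_
  rw [div_mul_eq_mul_div, le_div_iff₀ hκ]
  linarith

/-- Unsaturated case / flow-cut lemma: in the bidirectional
max-flow setup, if the minimum cut (source edges into `V_s ⊆ L`, sink edges from
`V_t ⊆ R`, internal edges `δ⁺(S)` scaled by `κ`) has total capacity strictly
less than `β·π(R)`, where `S` consists of the vertices reachable from `s`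
(so `L ∖ V_s ⊆ S` and `R ∖ V_t ⊆ Sᶜ`), then
`φ⃗_π(S) = w(δ⁺(S)) / min(π(S), π(Sᶜ)) ≤ β·max(1, r)/κ` with `r = π(R)/π(L)`. -/
theorem stmt_12 {V : Type*} [Fintype V] [DecidableEq V]
    (w : V → V → ℝ) (hw : ∀ i j, 0 ≤ w i j)
    (π : V → ℝ) (hπ : ∀ i, 0 < π i)
    (L R : Finset V) (hLR : Disjoint L R) (hL : L.Nonempty) (hR : R.Nonempty)
    (β κ : ℝ) (hβ : 0 < β) (hκ : 0 < κ)
    (r : ℝ) (hr : r = (∑ j ∈ R, π j) / (∑ i ∈ L, π i))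
    (Vs : Finset V) (hVs : Vs ⊆ L) (Vt : Finset V) (hVt : Vt ⊆ R)
    (S : Finset V)
    (hcut : r * β * (∑ i ∈ Vs, π i) + β * (∑ j ∈ Vt, π j) +
        κ * (∑ i ∈ S, ∑ j ∈ Sᶜ, w i j) < β * ∑ j ∈ R, π j)
    (hSL : L \ Vs ⊆ S) (hSR : R \ Vt ⊆ Sᶜ) :
    (∑ i ∈ S, ∑ j ∈ Sᶜ, w i j) / min (∑ i ∈ S, π i) (∑ i ∈ Sᶜ, π i)
      ≤ β * max 1 r / κ :=
  stmt_12_general w π hπ L R hL β κ hβ hκ r hr Vs Vt S hcut hSL hSR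
end

section
/- Let L, R ⊆ V be disjoint with weights π, r = π(R)/π(L), and let D be a directed fractional perfect matching between L and R: each i ∈ L has in-degree and out-degree exactly r·π(i) and each j ∈ R has in-degree and out-degree exactly π(j) (in the weighted Eulerian sense). Let x: V → ℝ with ∑_i π(i)·x(i) = 0, and suppose there is y ∈ ℝ with x(i) ≤ y for all i ∈ L and x(j) ≥ y for all j ∈ R, and r ≥ 1/3. Then ∑_{i∈L, j∈R} (D(i,j)+D(j,i))·(x(i)−x(j))² ≥ (2/3)·∑_i π(i)·x(i)². -/
/-!
Shift by the threshold `y`: since `x i ≤ y ≤ x j` across every edge, `(x i - x j)²` dominates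
`(x i - y)² + (x j - y)²`. Summing against `D` and using the degree constraints turns the right side
into `2r·∑_L π (x - y)² + 2·∑_R π (x - y)²`, which is at least `(2/3)·∑ π (x - y)²` as `r ≥ 1/3`.
Finally, centering gives `∑ π (x - y)² = ∑ π x² + y²·∑ π ≥ ∑ π x²`.
-/

open Finset

lemma sq_sub_add_sq_sub_le_sq_sub {a b y : ℝ} (hay : a ≤ y) (hyb : y ≤ b) :
    (a - y) ^ 2 + (b - y) ^ 2 ≤ (a - b) ^ 2 := by
  nlinarith [mul_nonneg (sub_nonneg.2 hay) (sub_nonneg.2 hyb)]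

lemma sum_sum_mul_add_eq {α β : Type*} (s : Finset α) (t : Finset β) (W : α → β → ℝ)
    (f : α → ℝ) (g : β → ℝ) :
    ∑ i ∈ s, ∑ j ∈ t, W i j * (f i + g j) =
      ∑ i ∈ s, (∑ j ∈ t, W i j) * f i + ∑ j ∈ t, (∑ i ∈ s, W i j) * g j := by
  simp only [mul_add, sum_add_distrib, sum_mul]
  exact congrArg _ sum_comm

lemma sum_mul_sq_le_sum_mul_sq_sub {ι : Type*} (s : Finset ι) {π x : ι → ℝ}
    (hπ : ∀ i ∈ s, 0 ≤ π i) (hx : ∑ i ∈ s, π i * x i = 0) (y : ℝ) :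
    ∑ i ∈ s, π i * x i ^ 2 ≤ ∑ i ∈ s, π i * (x i - y) ^ 2 := by
  have hexpand : ∑ i ∈ s, π i * (x i - y) ^ 2 =
      ∑ i ∈ s, π i * x i ^ 2 - 2 * y * ∑ i ∈ s, π i * x i + y ^ 2 * ∑ i ∈ s, π i := by
    simp only [mul_sum, ← sum_sub_distrib, ← sum_add_distrib]
    exact sum_congr rfl fun i _ => by ring
  rw [hexpand, hx]
  nlinarith [sum_nonneg hπ, sq_nonneg y]

theorem stmt_14_general {V : Type*} [Fintype V] [DecidableEq V]
    (π : V → ℝ) (hπ : ∀ i, 0 < π i)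
    (L R : Finset V) (hLR : Disjoint L R) (hLR' : L ∪ R = Finset.univ)
    (r : ℝ) (hr : 1 / 3 ≤ r)
    (D : V → V → ℝ) (hD : ∀ i j, 0 ≤ D i j)
    (hdegL : ∀ i ∈ L, (∑ j ∈ R, D i j = r * π i) ∧ (∑ j ∈ R, D j i = r * π i))
    (hdegR : ∀ j ∈ R, (∑ i ∈ L, D i j = π j) ∧ (∑ i ∈ L, D j i = π j))
    (x : V → ℝ) (hx : ∑ i, π i * x i = 0)
    (y : ℝ) (hyL : ∀ i ∈ L, x i ≤ y) (hyR : ∀ j ∈ R, y ≤ x j) :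
    (2 / 3) * ∑ i, π i * x i ^ 2 ≤
      ∑ i ∈ L, ∑ j ∈ R, (D i j + D j i) * (x i - x j) ^ 2 := by
  have hweighted : (2 / 3) * ∑ i, π i * (x i - y) ^ 2 ≤
      ∑ i ∈ L, 2 * r * π i * (x i - y) ^ 2 + ∑ j ∈ R, 2 * π j * (x j - y) ^ 2 := by
    rw [← hLR', sum_union hLR, mul_add, mul_sum, mul_sum]
    have hterm : ∀ i, ∀ c ≥ 2 / 3, 2 / 3 * (π i * (x i - y) ^ 2) ≤ c * π i * (x i - y) ^ 2 :=
      fun i c hc => by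
        rw [mul_assoc]
        exact mul_le_mul_of_nonneg_right hc (mul_nonneg (hπ i).le (sq_nonneg _))
    exact add_le_add (sum_le_sum fun i _ => hterm i _ (by linarith))
      (sum_le_sum fun j _ => hterm j _ (by norm_num))
  calc (2 / 3) * ∑ i, π i * x i ^ 2
      ≤ (2 / 3) * ∑ i, π i * (x i - y) ^ 2 := by
        have := sum_mul_sq_le_sum_mul_sq_sub _ (fun i _ => (hπ i).le) hx y
        linarith
    _ ≤ ∑ i ∈ L, 2 * r * π i * (x i - y) ^ 2 + ∑ j ∈ R, 2 * π j * (x j - y) ^ 2 := hweighted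
    _ = ∑ i ∈ L, ∑ j ∈ R, (D i j + D j i) * ((x i - y) ^ 2 + (x j - y) ^ 2) := by
        rw [sum_sum_mul_add_eq]
        congr 1 <;> refine sum_congr rfl fun k hk => ?_
        · rw [sum_add_distrib, (hdegL k hk).1, (hdegL k hk).2]; ring
        · rw [sum_add_distrib, (hdegR k hk).1, (hdegR k hk).2]; ring
    _ ≤ ∑ i ∈ L, ∑ j ∈ R, (D i j + D j i) * (x i - x j) ^ 2 := by
        gcongr with i hi j hj
        · exact add_nonneg (hD i j) (hD j i)
        · exact sq_sub_add_sq_sub_le_sq_sub (hyL i hi) (hyR j hj)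

/-- for a directed fractional perfect matching `D` between a
partition `(L, R)` of `V` with ratio `r = π(R)/π(L) ≥ 1/3`, a centered function
`x` and a threshold `y` separating `x` on `L` from `x` on `R`,
`∑_{i∈L, j∈R} (D(i,j)+D(j,i))·(x(i)−x(j))² ≥ (2/3)·∑ π(i)·x(i)²`. -/
theorem stmt_14 {V : Type*} [Fintype V] [DecidableEq V]
    (π : V → ℝ) (hπ : ∀ i, 0 < π i)
    (L R : Finset V) (hLR : Disjoint L R) (hLR' : L ∪ R = Finset.univ)
    (r : ℝ) (hrdef : r = (∑ j ∈ R, π j) / (∑ i ∈ L, π i)) (hr : 1 / 3 ≤ r)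
    (D : V → V → ℝ) (hD : ∀ i j, 0 ≤ D i j)
    (hsupp : ∀ i j, D i j ≠ 0 → (i ∈ L ∧ j ∈ R) ∨ (i ∈ R ∧ j ∈ L))
    (hdegL : ∀ i ∈ L, (∑ j ∈ R, D i j = r * π i) ∧ (∑ j ∈ R, D j i = r * π i))
    (hdegR : ∀ j ∈ R, (∑ i ∈ L, D i j = π j) ∧ (∑ i ∈ L, D j i = π j))
    (x : V → ℝ) (hx : ∑ i, π i * x i = 0)
    (y : ℝ) (hyL : ∀ i ∈ L, x i ≤ y) (hyR : ∀ j ∈ R, y ≤ x j) :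
    (2 / 3) * ∑ i, π i * x i ^ 2 ≤
      ∑ i ∈ L, ∑ j ∈ R, (D i j + D j i) * (x i - x j) ^ 2 :=
  stmt_14_general π hπ L R hLR hLR' r hr D hD hdegL hdegR x hx y hyL hyR
end

section
/- Let G = (V, E, π) be a vertex-capacitated directed graph and construct G' = (V', E', w) with π' as follows: for each vertex i, create i_in and i_out with π'(i_in) = π(i) and π'(i_out) = δ for 0 < δ ≪ min_i π(i), an edge (i_in, i_out) with weight π(i); for each edge ij ∈ E, an edge (i_out, j_in) of weight M > ∑_i π(i). Then for every nonempty S ⊂ V there is a nonempty S' ⊂ V' with φ⃗_{π'}(S') ≤ C·ψ⃗_π(S) for an absolute constant C, where ψ⃗_π(S) = min{π(∂⁺(S)), π(∂⁺(V∖S))}/min{π(S), π(V∖S)} is the directed vertex expansion and φ⃗_{π'} is the directed edge expansion of G'. -/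
/-!
If the vertex expansion `N / D` of `S` is at least `1/2`, then `S' = {i_in}` for a vertex `i` of
least capacity already has edge expansion at most `1 ≤ 2 N / D`: its only out-edge is
`(i_in, i_out)` of weight `π i`, and both sides of the cut carry vertex weight at least `π i`.

Otherwise, say `N = π(∂⁺S)`, take `S' = (S ∪ ∂⁺S)_in ∪ S_out`. Every edge `(i_out, j_in)` with
`i ∈ S` stays inside `S'`, so the only edges leaving `S'` are the internal edges of the vertices
of `∂⁺S`, of total weight `N`. Both sides of `S'` keep vertex weight at least `D - N ≥ D / 2`,
so `S'` has edge expansion at most `2 N / D`. The case `N = π(∂⁺(V ∖ S))` is the same with `S`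
and `V ∖ S` exchanged.
-/

open Finset

lemma Finset.compl_disjSum {α β : Type*} [Fintype α] [Fintype β] [DecidableEq α]
    [DecidableEq β] (s : Finset α) (t : Finset β) : (s.disjSum t)ᶜ = sᶜ.disjSum tᶜ := by
  ext (a | b) <;> simp

section EdgeExpansion

variable {α : Type*} [Fintype α] [DecidableEq α]

noncomputable def edgeExpansion (w : α → α → ℝ) (μ : α → ℝ) (S : Finset α) : ℝ :=
  min (∑ a ∈ S, ∑ b ∈ Sᶜ, w a b) (∑ a ∈ Sᶜ, ∑ b ∈ S, w a b) /
    min (∑ a ∈ S, μ a) (∑ a ∈ Sᶜ, μ a)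

lemma edgeExpansion_le_div {w : α → α → ℝ} {μ : α → ℝ} {S : Finset α} {c d : ℝ}
    (hc : 0 ≤ c) (hd : 0 < d) (hcut : ∑ a ∈ S, ∑ b ∈ Sᶜ, w a b ≤ c)
    (hS : d ≤ ∑ a ∈ S, μ a) (hSc : d ≤ ∑ a ∈ Sᶜ, μ a) :
    edgeExpansion w μ S ≤ c / d :=
  div_le_div₀ hc ((min_le_left _ _).trans hcut) hd (le_min hS hSc)

end EdgeExpansion

def outNeighborhood {V : Type*} [Fintype V] [DecidableEq V] (A : V → V → Prop)
    [DecidableRel A] (S : Finset V) : Finset V :=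
  univ.filter fun x => x ∉ S ∧ ∃ u ∈ S, A u x

noncomputable def vertexExpansion {V : Type*} [Fintype V] [DecidableEq V] (A : V → V → Prop)
    [DecidableRel A] (π : V → ℝ) (S : Finset V) : ℝ :=
  min (∑ x ∈ outNeighborhood A S, π x) (∑ x ∈ outNeighborhood A Sᶜ, π x) /
    min (∑ i ∈ S, π i) (∑ i ∈ Sᶜ, π i)

namespace SplitGraph

variable {V : Type*}

def vertexWeight (π : V → ℝ) (δ : ℝ) : V ⊕ V → ℝ := Sum.elim π fun _ => δ

lemma sum_le_sum_vertexWeight_disjSum {π : V → ℝ} {δ : ℝ} (hδ : 0 ≤ δ) (U T : Finset V) :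
    ∑ i ∈ U, π i ≤ ∑ a ∈ U.disjSum T, vertexWeight π δ a := by
  simp only [sum_disjSum, vertexWeight, Sum.elim_inl, Sum.elim_inr]
  exact le_add_of_nonneg_right (sum_nonneg fun _ _ => hδ)

variable [DecidableEq V] (A : V → V → Prop) [DecidableRel A] (π : V → ℝ) (M : ℝ)

def edgeWeight : V ⊕ V → V ⊕ V → ℝ
  | .inl i, .inr j => if i = j then π i else 0
  | .inr i, .inl j => if A i j then M else 0
  | .inl _, .inl _ | .inr _, .inr _ => 0

variable {A π} {δ : ℝ} [Fintype V]

lemma cut_disjSum {U T : Finset V} (hclosed : ∀ i ∈ T, ∀ j, A i j → j ∈ U) :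
    ∑ a ∈ U.disjSum T, ∑ b ∈ (U.disjSum T)ᶜ, edgeWeight A π M a b = ∑ i ∈ U \ T, π i := by
  have h_in : ∀ i ∈ U, ∑ b ∈ (U.disjSum T)ᶜ, edgeWeight A π M (Sum.inl i) b
      = if i ∉ T then π i else 0 := by
    intro i _
    simp [compl_disjSum, edgeWeight, sum_ite_eq]
  have h_out : ∀ i ∈ T, ∑ b ∈ (U.disjSum T)ᶜ, edgeWeight A π M (Sum.inr i) b = 0 := by
    intro i hi
    simp only [compl_disjSum, sum_disjSum, edgeWeight, sum_const_zero, add_zero]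
    exact sum_eq_zero fun j hj => if_neg fun hA => mem_compl.mp hj (hclosed i hi j hA)
  rw [sum_disjSum, sum_congr rfl h_in, sum_congr rfl h_out, sum_const_zero, add_zero,
    ← sum_filter, sdiff_eq_filter]

variable (A)

lemma exists_edgeExpansion_le_one [Nontrivial V] (hπ : ∀ i, 0 < π i) (hδ : 0 ≤ δ) :
    ∃ S' : Finset (V ⊕ V), S'.Nonempty ∧ S' ≠ univ ∧
      edgeExpansion (edgeWeight A π M) (vertexWeight π δ) S' ≤ 1 := by
  obtain ⟨i, hi⟩ := Finite.exists_min π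
  obtain ⟨j, hj⟩ := exists_ne i
  refine ⟨({i} : Finset V).disjSum ∅, ⟨Sum.inl i, by simp⟩,
    (ne_of_mem_of_not_mem' (mem_univ (Sum.inr i)) (by simp)).symm, ?_⟩
  have hcut := cut_disjSum (A := A) (π := π) M (U := {i}) (T := ∅) (by simp)
  rw [sdiff_empty, sum_singleton] at hcut
  have hcompl : π i ≤ ∑ a ∈ (({i} : Finset V).disjSum ∅)ᶜ, vertexWeight π δ a := by
    rw [compl_disjSum]
    refine (hi j).trans ((single_le_sum (fun k _ => (hπ k).le) (by simpa using hj)).trans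
      (sum_le_sum_vertexWeight_disjSum hδ _ _))
  rw [← div_self (hπ i).ne']
  exact edgeExpansion_le_div (hπ i).le (hπ i) hcut.le
    (by simpa using sum_le_sum_vertexWeight_disjSum hδ {i} (∅ : Finset V)) hcompl

lemma exists_edgeExpansion_le_of_outNeighborhood (hπ : ∀ i, 0 < π i) (hδ : 0 ≤ δ)
    {T : Finset V} (hT : T.Nonempty) (hTc : Tᶜ.Nonempty) {d : ℝ}
    (hdT : d ≤ ∑ i ∈ T, π i) (hdTc : d ≤ ∑ i ∈ Tᶜ, π i)
    (hN : 2 * ∑ x ∈ outNeighborhood A T, π x < d) :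
    ∃ S' : Finset (V ⊕ V), S'.Nonempty ∧ S' ≠ univ ∧
      edgeExpansion (edgeWeight A π M) (vertexWeight π δ) S'
        ≤ 2 * ((∑ x ∈ outNeighborhood A T, π x) / d) := by
  set N := outNeighborhood A T
  have hNT : Disjoint N T := disjoint_left.mpr fun x hx => (mem_filter.mp hx).2.1
  obtain ⟨z, hz⟩ := hT
  obtain ⟨y, hy⟩ := hTc
  refine ⟨(T ∪ N).disjSum T, ⟨Sum.inr z, by simpa using hz⟩,
    (ne_of_mem_of_not_mem' (mem_univ (Sum.inr y)) (by simpa using mem_compl.mp hy)).symm, ?_⟩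
  have hN0 : 0 ≤ ∑ x ∈ N, π x := sum_nonneg fun x _ => (hπ x).le
  have hcut := cut_disjSum (A := A) (π := π) M (T := T) (U := T ∪ N)
    fun i hi j hA => by
      by_cases hj : j ∈ T
      · exact mem_union_left _ hj
      · exact mem_union_right _ (mem_filter.mpr ⟨mem_univ _, hj, i, hi, hA⟩)
  rw [union_sdiff_left, sdiff_eq_self_of_disjoint hNT] at hcut
  have hS' : d / 2 ≤ ∑ a ∈ (T ∪ N).disjSum T, vertexWeight π δ a := by
    have := (sum_le_sum_of_subset_of_nonneg subset_union_left fun i _ _ => (hπ i).le).trans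
      (sum_le_sum_vertexWeight_disjSum hδ (T ∪ N) T)
    linarith
  have hS'c : d / 2 ≤ ∑ a ∈ ((T ∪ N).disjSum T)ᶜ, vertexWeight π δ a := by
    have hsplit : ∑ i ∈ (T ∪ N)ᶜ, π i + ∑ i ∈ N, π i = ∑ i ∈ Tᶜ, π i := by
      rw [show (T ∪ N)ᶜ = Tᶜ \ N by ext; simp,
        sum_sdiff fun x hx => mem_compl.mpr (disjoint_left.mp hNT hx)]
    have := sum_le_sum_vertexWeight_disjSum hδ (T ∪ N)ᶜ Tᶜ (π := π)
    rw [compl_disjSum]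
    linarith
  calc edgeExpansion (edgeWeight A π M) (vertexWeight π δ) ((T ∪ N).disjSum T)
      ≤ (∑ x ∈ N, π x) / (d / 2) :=
        edgeExpansion_le_div hN0 (by linarith) hcut.le hS' hS'c
    _ = 2 * ((∑ x ∈ N, π x) / d) := by ring

lemma exists_edgeExpansion_le (hπ : ∀ i, 0 < π i) (hδ : 0 ≤ δ) {S : Finset V}
    (hS : S.Nonempty) (hSu : S ≠ univ) :
    ∃ S' : Finset (V ⊕ V), S'.Nonempty ∧ S' ≠ univ ∧
      edgeExpansion (edgeWeight A π M) (vertexWeight π δ) S'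
        ≤ 2 * vertexExpansion A π S := by
  rw [vertexExpansion]
  obtain ⟨x, hx⟩ := hS
  obtain ⟨y, hy⟩ : Sᶜ.Nonempty := by simpa [eq_univ_iff_forall, Finset.Nonempty] using hSu
  have hD : 0 < min (∑ i ∈ S, π i) (∑ i ∈ Sᶜ, π i) :=
    lt_min (sum_pos (fun i _ => hπ i) ⟨x, hx⟩) (sum_pos (fun i _ => hπ i) ⟨y, hy⟩)
  by_cases hlarge : min (∑ i ∈ S, π i) (∑ i ∈ Sᶜ, π i)
      ≤ 2 * min (∑ x ∈ outNeighborhood A S, π x) (∑ x ∈ outNeighborhood A Sᶜ, π x)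
  · have : Nontrivial V := nontrivial_of_ne x y fun h => mem_compl.mp hy (h ▸ hx)
    obtain ⟨S', hne, hnu, hle⟩ := exists_edgeExpansion_le_one A M hπ hδ
    refine ⟨S', hne, hnu, hle.trans ?_⟩
    rw [mul_div_assoc', le_div_iff₀ hD]
    linarith
  push Not at hlarge
  rcases min_choice (∑ x ∈ outNeighborhood A S, π x) (∑ x ∈ outNeighborhood A Sᶜ, π x)
    with hN | hN <;> rw [hN] at hlarge ⊢
  · exact exists_edgeExpansion_le_of_outNeighborhood A M hπ hδ ⟨x, hx⟩ ⟨y, hy⟩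
      (min_le_left _ _) (min_le_right _ _) hlarge
  · exact exists_edgeExpansion_le_of_outNeighborhood A M hπ hδ ⟨y, hy⟩
      (by rw [compl_compl]; exact ⟨x, hx⟩) (min_le_right _ _)
      (by rw [compl_compl]; exact min_le_left _ _) hlarge

end SplitGraph

/-- Reduction from directed vertex expansion to directed edge
expansion: there is an absolute constant `C > 0` such that for every
vertex-capacitated directed graph `G = (V, E, π)`, the split graph `G'` on
`V ⊕ V` (with `inl i = i_in`, `inr i = i_out`, internal edges `(i_in, i_out)` of
weight `π(i)`, edges `(i_out, j_in)` of weight `M` for `ij ∈ E`, and vertex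
weights `π'(i_in) = π(i)`, `π'(i_out) = δ`) satisfies: for every nonempty proper
`S ⊂ V` there is a nonempty proper `S' ⊂ V ⊕ V` with
`φ⃗_{π'}(S') ≤ C · ψ⃗_π(S)`. -/
theorem stmt_16 :
    ∃ C : ℝ, 0 < C ∧
    ∀ (V : Type) [Fintype V] [DecidableEq V]
      (A : V → V → Prop) [DecidableRel A]
      (π : V → ℝ), (∀ i, 0 < π i) →
    ∀ δ M : ℝ, 0 < δ → (∀ i, δ ≤ π i) → (∑ i, π i) < M →
    let w' : V ⊕ V → V ⊕ V → ℝ := fun a b =>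
      match a, b with
      | Sum.inl i, Sum.inr i' => if i = i' then π i else 0
      | Sum.inr i, Sum.inl j => if A i j then M else 0
      | _, _ => 0
    let π' : V ⊕ V → ℝ := Sum.elim π fun _ => δ
    let outNbr : Finset V → Finset V := fun S =>
      Finset.univ.filter fun x => x ∉ S ∧ ∃ u ∈ S, A u x
    ∀ S : Finset V, S.Nonempty → S ≠ Finset.univ →
    ∃ S' : Finset (V ⊕ V), S'.Nonempty ∧ S' ≠ Finset.univ ∧
      min (∑ a ∈ S', ∑ b ∈ S'ᶜ, w' a b) (∑ a ∈ S'ᶜ, ∑ b ∈ S', w' a b) /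
          min (∑ a ∈ S', π' a) (∑ a ∈ S'ᶜ, π' a)
        ≤ C * (min (∑ x ∈ outNbr S, π x) (∑ x ∈ outNbr Sᶜ, π x) /
            min (∑ i ∈ S, π i) (∑ i ∈ Sᶜ, π i)) := by
  refine ⟨2, two_pos, ?_⟩
  intro V _ _ A _ π hπ δ M hδ _ _ w' π' outNbr S hS hSu
  have hw : w' = SplitGraph.edgeWeight A π M := by
    funext a b
    rcases a with _ | _ <;> rcases b with _ | _ <;> rfl
  rw [hw]
  exact SplitGraph.exists_edgeExpansion_le A M hπ hδ.le hS hSu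
end

section
/- Let Mₜ, t = 0,…,T−1 be symmetric matrices with 0 ⪯ Mₜ and ‖Mₜ‖ ≤ ρ, and let Xₜ be the density matrices from the matrix multiplicative weight update rule X_{t+1} ∝ exp(−(η/ρ)∑_{i=0}^{t} M_i) with X₀ = I/n and step size η ∈ (0,1). Then λ_min((1/T)∑_{t=0}^{T−1} Mₜ) ≥ c·((1−η)·(1/T)∑_{t=0}^{T−1} ⟨Mₜ, Xₜ⟩ − (ρ·log n)/(η·T)) for an absolute constant c > 0. -/
/-- The ℓ₂→ℓ₂ operator (spectral) norm of a real matrix. -/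
noncomputable def specNorm {n : ℕ} (M : Matrix (Fin n) (Fin n) ℝ) : ℝ :=
  ‖(Matrix.toEuclideanCLM (𝕜 := ℝ) M : EuclideanSpace ℝ (Fin n) →L[ℝ] EuclideanSpace ℝ (Fin n))‖

/-- The minimum eigenvalue of a symmetric matrix. -/
noncomputable def lambdaMin {n : ℕ} (M : Matrix (Fin (n + 1)) (Fin (n + 1)) ℝ) : ℝ :=
  if h : M.IsHermitian then Finset.univ.inf' Finset.univ_nonempty h.eigenvalues else 0

/-!
The potential `Φ t = tr exp (-(η/ρ) ∑_{i<t} M i)` drops by the factor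
`1 - (1-η)(η/ρ)⟨M t, X t⟩` in each round, so `Φ T ≤ n exp (-(1-η)(η/ρ) ∑_t ⟨M t, X t⟩)`,
while `Φ T ≥ exp (-(η/ρ) T λ_min)`; comparing logarithms gives the bound with `c = 1`.

The one-round drop `tr e^(V-B) ≤ tr e^V - (1-η) tr (B e^V)` for `0 ⪯ B`, `B² ⪯ ηB` takes the
place of the Golden–Thompson inequality. Diagonalising `V - B = P diag λ Pᵀ` and `V = Q diag μ Qᵀ`, the
matrix `B` has entries `(μ_j - λ_i) R_ij` in the mixed basis `R = Pᵀ Q`, so each of the traces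
`tr (Bᵃ e^V)`, `tr (Bᵃ e^(V-B))` with `a ≤ 2` is a sum of a scalar function of `(λ_i, μ_j)`
against the weights `R_ij² ≥ 0`. The scalar inequalities `(m - l) e^l ≤ e^m - e^l` and
`e^d - 1 - d ≤ d²/2 (1 + e^d)` therefore carry over to the traces term by term.
-/

open Matrix NormedSpace

namespace Real

lemma sub_mul_exp_le_exp_sub_exp (l m : ℝ) : (m - l) * exp l ≤ exp m - exp l := by
  have h := mul_le_mul_of_nonneg_right (add_one_le_exp (m - l)) (exp_pos l).le
  rw [← exp_add, sub_add_cancel] at h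
  linarith

lemma exp_le_one_add_add_sq_div_two_of_nonpos {d : ℝ} (hd : d ≤ 0) :
    exp d ≤ 1 + d + d ^ 2 / 2 := by
  have hcubic : 1 + -d + (-d) ^ 2 / 2 + (-d) ^ 3 / 6 ≤ exp (-d) := by
    have h := sum_le_exp_of_nonneg (neg_nonneg.2 hd) 4
    norm_num [Finset.sum_range_succ, Nat.factorial] at h
    linarith
  have hprod : exp d * exp (-d) = 1 := by rw [← exp_add, add_neg_cancel, exp_zero]
  nlinarith [exp_pos d, mul_le_mul_of_nonneg_left hcubic (exp_pos d).le, sq_nonneg d,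
    pow_two_nonneg (d ^ 2), mul_nonneg (neg_nonneg.2 hd) (sq_nonneg d)]

lemma exp_sub_one_sub_le_of_nonneg {d : ℝ} (hd : 0 ≤ d) :
    exp d - 1 - d ≤ d ^ 2 / 2 * exp d := by
  rcases le_or_gt 2 (d ^ 2) with hd2 | hd2
  · nlinarith [add_one_le_exp d, exp_pos d]
  · have hpade := exp_le_two_add_div_two_sub hd (by nlinarith)
    rw [le_div_iff₀ (by nlinarith)] at hpade
    nlinarith [mul_le_mul_of_nonneg_right hpade (by linarith : (0:ℝ) ≤ 2 - d ^ 2), exp_pos d]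

lemma exp_sub_one_sub_le (d : ℝ) : exp d - 1 - d ≤ d ^ 2 / 2 * (1 + exp d) := by
  rcases le_total d 0 with hd | hd
  · nlinarith [exp_le_one_add_add_sq_div_two_of_nonpos hd, exp_pos d, sq_nonneg d]
  · nlinarith [exp_sub_one_sub_le_of_nonneg hd, sq_nonneg d]

end Real

namespace Matrix

variable {ι : Type*} [Fintype ι]

lemma PosSemidef.trace_mul_nonneg {A B : Matrix ι ι ℝ} (hA : A.PosSemidef) (hB : B.PosSemidef) :
    0 ≤ trace (A * B) := by
  have hBt : Bᵀ = B := IsSymm.eq hB.1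
  have h := (hA.hadamard hB).dotProduct_mulVec_nonneg (fun _ => 1)
  rw [← hBt, ← sum_hadamard_eq]
  simpa [dotProduct, mulVec] using h

variable [DecidableEq ι]

lemma posSemidef_mul_diagonal_mul_star (U : Matrix ι ι ℝ) {d : ι → ℝ} (hd : 0 ≤ d) :
    (U * diagonal d * star U).PosSemidef :=
  (PosSemidef.diagonal hd).mul_mul_conjTranspose_same _

lemma trace_unitary_conj {U : Matrix ι ι ℝ} (hU : U ∈ unitaryGroup ι ℝ) (D : Matrix ι ι ℝ) :
    trace (U * D * star U) = trace D := by
  rw [trace_mul_cycle, Unitary.star_mul_self_of_mem hU, one_mul]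

lemma exp_unitary_conj_diagonal {U : Matrix ι ι ℝ} (hU : U ∈ unitaryGroup ι ℝ) (d : ι → ℝ) :
    exp (U * diagonal d * star U) = U * diagonal (fun i => Real.exp (d i)) * star U := by
  have h := exp_units_conj (Unitary.toUnits ⟨U, hU⟩) (diagonal d)
  simp only [Unitary.val_toUnits_apply, Unitary.val_inv_toUnits_apply, UnitaryGroup.inv_val] at h
  rw [h, exp_diagonal, Real.exp_eq_exp_ℝ, Pi.exp_def]

lemma IsHermitian.eq_conj_diagonal {A : Matrix ι ι ℝ} (hA : A.IsHermitian) :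
    A = (hA.eigenvectorUnitary : Matrix ι ι ℝ) * diagonal hA.eigenvalues *
      star (hA.eigenvectorUnitary : Matrix ι ι ℝ) := by
  simpa [RCLike.ofReal_real_eq_id] using hA.spectral_theorem

lemma IsHermitian.exp_eq {A : Matrix ι ι ℝ} (hA : A.IsHermitian) :
    NormedSpace.exp A = (hA.eigenvectorUnitary : Matrix ι ι ℝ) *
      diagonal (fun i => Real.exp (hA.eigenvalues i)) *
        star (hA.eigenvectorUnitary : Matrix ι ι ℝ) := by
  conv_lhs => rw [hA.eq_conj_diagonal]
  exact exp_unitary_conj_diagonal hA.eigenvectorUnitary.2 _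

lemma IsHermitian.posSemidef_exp {A : Matrix ι ι ℝ} (hA : A.IsHermitian) :
    (NormedSpace.exp A).PosSemidef := by
  rw [hA.exp_eq]
  exact posSemidef_mul_diagonal_mul_star _ fun i => (Real.exp_pos _).le

section TwoEigenbases

variable {P Q : Matrix ι ι ℝ}

lemma trace_mul_conj_diagonal_mul_conj_diagonal (hP : P ∈ unitaryGroup ι ℝ)
    {X Y : Matrix ι ι ℝ} {x y : ι → ι → ℝ}
    (hX : ∀ i j, (star P * X * Q) i j = x i j * (star P * Q) i j)
    (hY : ∀ i j, (star Q * Y * P) j i = y i j * (star P * Q) i j) (f g : ι → ℝ) :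
    trace (X * (Q * diagonal g * star Q) * Y * (P * diagonal f * star P)) =
      ∑ i, ∑ j, (star P * Q) i j ^ 2 * (x i j * y i j * g j * f i) := by
  have h : X * (Q * diagonal g * star Q) * Y * (P * diagonal f * star P) =
      P * (star P * X * Q * diagonal g * (star Q * Y * P) * diagonal f) * star P := by
    simp only [← mul_assoc, Unitary.mul_star_self_of_mem hP, one_mul]
  have hsum : trace (star P * X * Q * diagonal g * (star Q * Y * P) * diagonal f) =
      ∑ i, ∑ j, (star P * X * Q) i j * g j * (star Q * Y * P) j i * f i := by
    generalize star P * X * Q = K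
    generalize star Q * Y * P = L
    simp [trace, mul_apply, diagonal_apply, Finset.sum_mul]
  rw [h, trace_unitary_conj hP, hsum]
  refine Finset.sum_congr rfl fun i _ => Finset.sum_congr rfl fun j _ => ?_
  rw [hX, hY]
  ring

lemma unitary_conj_sub_conj_apply (hP : P ∈ unitaryGroup ι ℝ) (hQ : Q ∈ unitaryGroup ι ℝ)
    (lam mu : ι → ℝ) (i j : ι) :
    (star P * (Q * diagonal mu * star Q - P * diagonal lam * star P) * Q) i j =
      (mu j - lam i) * (star P * Q) i j := by
  have h : star P * (Q * diagonal mu * star Q - P * diagonal lam * star P) * Q =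
      star P * Q * diagonal mu - diagonal lam * (star P * Q) := by
    simp only [mul_sub, sub_mul, ← mul_assoc, Unitary.star_mul_self_of_mem hP, one_mul]
    rw [mul_assoc _ (star Q), Unitary.star_mul_self_of_mem hQ, mul_one]
  rw [h, sub_apply, mul_diagonal, diagonal_mul]
  ring

variable {B : Matrix ι ι ℝ} {lam mu : ι → ℝ}

lemma trace_pow_mul_conj_exp_eq_sum_right (hP : P ∈ unitaryGroup ι ℝ)
    (hPBQ : ∀ i j, (star P * B * Q) i j = (mu j - lam i) * (star P * Q) i j)
    (hQBP : ∀ i j, (star Q * B * P) j i = (mu j - lam i) * (star P * Q) i j) {a : ℕ} (ha : a ≤ 2) :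
    trace (B ^ a * (Q * diagonal (fun j => Real.exp (mu j)) * star Q)) =
      ∑ i, ∑ j, (star P * Q) i j ^ 2 * ((mu j - lam i) ^ a * Real.exp (mu j)) := by
  set E := Q * diagonal (fun j => Real.exp (mu j)) * star Q
  have hone : P * diagonal (fun _ => 1) * star P = 1 := by
    rw [diagonal_one, mul_one, Unitary.mul_star_self_of_mem hP]
  have hPQ : ∀ i j, (star P * (1 : Matrix ι ι ℝ) * Q) i j = 1 * (star P * Q) i j := by simp
  have hQP : ∀ i j, (star Q * (1 : Matrix ι ι ℝ) * P) j i = 1 * (star P * Q) i j := by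
    simp [mul_apply, mul_comm]
  interval_cases a
  · calc trace (B ^ 0 * E) = trace (1 * E * 1 * (P * diagonal (fun _ => 1) * star P)) := by
          rw [hone]; simp
      _ = _ := (trace_mul_conj_diagonal_mul_conj_diagonal hP hPQ hQP _ _).trans
        (Finset.sum_congr rfl fun i _ => Finset.sum_congr rfl fun j _ => by ring)
  · calc trace (B ^ 1 * E) = trace (B * E * 1 * (P * diagonal (fun _ => 1) * star P)) := by
          rw [hone]; simp
      _ = _ := (trace_mul_conj_diagonal_mul_conj_diagonal hP hPBQ hQP _ _).trans
        (Finset.sum_congr rfl fun i _ => Finset.sum_congr rfl fun j _ => by ring)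
  · calc trace (B ^ 2 * E) = trace (B * E * B * (P * diagonal (fun _ => 1) * star P)) := by
          rw [hone, mul_one, sq, trace_mul_cycle B E B]
      _ = _ := (trace_mul_conj_diagonal_mul_conj_diagonal hP hPBQ hQBP _ _).trans
        (Finset.sum_congr rfl fun i _ => Finset.sum_congr rfl fun j _ => by ring)

lemma trace_pow_mul_conj_exp_eq_sum_left (hP : P ∈ unitaryGroup ι ℝ)
    (hQ : Q ∈ unitaryGroup ι ℝ)
    (hPBQ : ∀ i j, (star P * B * Q) i j = (mu j - lam i) * (star P * Q) i j)
    (hQBP : ∀ i j, (star Q * B * P) j i = (mu j - lam i) * (star P * Q) i j) {a : ℕ} (ha : a ≤ 2) :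
    trace (B ^ a * (P * diagonal (fun i => Real.exp (lam i)) * star P)) =
      ∑ i, ∑ j, (star P * Q) i j ^ 2 * ((mu j - lam i) ^ a * Real.exp (lam i)) := by
  set E := P * diagonal (fun i => Real.exp (lam i)) * star P
  have hone : Q * diagonal (fun _ => 1) * star Q = 1 := by
    rw [diagonal_one, mul_one, Unitary.mul_star_self_of_mem hQ]
  have hPQ : ∀ i j, (star P * (1 : Matrix ι ι ℝ) * Q) i j = 1 * (star P * Q) i j := by simp
  have hQP : ∀ i j, (star Q * (1 : Matrix ι ι ℝ) * P) j i = 1 * (star P * Q) i j := by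
    simp [mul_apply, mul_comm]
  interval_cases a
  · calc trace (B ^ 0 * E) = trace (1 * (Q * diagonal (fun _ => 1) * star Q) * 1 * E) := by
          rw [hone]; simp
      _ = _ := (trace_mul_conj_diagonal_mul_conj_diagonal hP hPQ hQP _ _).trans
        (Finset.sum_congr rfl fun i _ => Finset.sum_congr rfl fun j _ => by ring)
  · calc trace (B ^ 1 * E) = trace (1 * (Q * diagonal (fun _ => 1) * star Q) * B * E) := by
          rw [hone]; simp
      _ = _ := (trace_mul_conj_diagonal_mul_conj_diagonal hP hPQ hQBP _ _).trans
        (Finset.sum_congr rfl fun i _ => Finset.sum_congr rfl fun j _ => by ring)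
  · calc trace (B ^ 2 * E) = trace (B * (Q * diagonal (fun _ => 1) * star Q) * B * E) := by
          rw [hone, mul_one, sq]
      _ = _ := (trace_mul_conj_diagonal_mul_conj_diagonal hP hPBQ hQBP _ _).trans
        (Finset.sum_congr rfl fun i _ => Finset.sum_congr rfl fun j _ => by ring)

end TwoEigenbases

lemma exists_trace_pow_mul_exp_eq_sum {V B : Matrix ι ι ℝ} (hV : V.IsHermitian)
    (hB : B.IsHermitian) :
    ∃ (w : ι → ι → ℝ) (lam mu : ι → ℝ), (∀ i j, 0 ≤ w i j) ∧ ∀ a ≤ 2,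
      trace (B ^ a * exp V) = ∑ i, ∑ j, w i j * ((mu j - lam i) ^ a * Real.exp (mu j)) ∧
      trace (B ^ a * exp (V - B)) = ∑ i, ∑ j, w i j * ((mu j - lam i) ^ a * Real.exp (lam i)) := by
  have hU : (V - B).IsHermitian := hV.sub hB
  set P : Matrix ι ι ℝ := (hU.eigenvectorUnitary : Matrix ι ι ℝ)
  set Q : Matrix ι ι ℝ := (hV.eigenvectorUnitary : Matrix ι ι ℝ)
  have hP : P ∈ unitaryGroup ι ℝ := hU.eigenvectorUnitary.2
  have hQ : Q ∈ unitaryGroup ι ℝ := hV.eigenvectorUnitary.2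
  set lam := hU.eigenvalues
  set mu := hV.eigenvalues
  have hPBQ : ∀ i j, (star P * B * Q) i j = (mu j - lam i) * (star P * Q) i j := by
    intro i j
    rw [show B = Q * diagonal mu * star Q - P * diagonal lam * star P by
      rw [← hU.eq_conj_diagonal, ← hV.eq_conj_diagonal, sub_sub_cancel]]
    exact unitary_conj_sub_conj_apply hP hQ _ _ i j
  have hQBP : ∀ i j, (star Q * B * P) j i = (mu j - lam i) * (star P * Q) i j := by
    intro i j
    have hBt : Bᵀ = B := IsSymm.eq hB
    have h : (star Q * B * P)ᵀ = star P * B * Q := by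
      simp [transpose_mul, star_eq_conjTranspose, hBt, mul_assoc]
    rw [← hPBQ, ← h, transpose_apply]
  refine ⟨fun i j => (star P * Q) i j ^ 2, lam, mu,
    fun i j => sq_nonneg _, fun a ha => ⟨?_, ?_⟩⟩
  · rw [hV.exp_eq]; exact trace_pow_mul_conj_exp_eq_sum_right hP hPBQ hQBP ha
  · rw [hU.exp_eq]; exact trace_pow_mul_conj_exp_eq_sum_left hP hQ hPBQ hQBP ha

variable {V B : Matrix ι ι ℝ}

lemma trace_mul_exp_sub_le (hV : V.IsHermitian) (hB : B.IsHermitian) :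
    trace (B * exp (V - B)) ≤ trace (exp V) - trace (exp (V - B)) := by
  obtain ⟨w, lam, mu, hw, htr⟩ := exists_trace_pow_mul_exp_eq_sum hV hB
  obtain ⟨hV0, hU0⟩ := htr 0 (by norm_num)
  obtain ⟨-, hU1⟩ := htr 1 (by norm_num)
  rw [pow_one] at hU1
  rw [pow_zero, one_mul] at hV0 hU0
  rw [hU1, hV0, hU0, ← sub_nonneg]
  simp only [← Finset.sum_sub_distrib]
  refine Finset.sum_nonneg fun i _ => Finset.sum_nonneg fun j _ => ?_
  nlinarith [mul_le_mul_of_nonneg_left (Real.sub_mul_exp_le_exp_sub_exp (lam i) (mu j)) (hw i j)]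

lemma trace_exp_sub_le_quadratic (hV : V.IsHermitian) (hB : B.IsHermitian) :
    trace (exp (V - B)) ≤ trace (exp V) - trace (B * exp V) +
      (trace (B ^ 2 * exp V) + trace (B ^ 2 * exp (V - B))) / 2 := by
  obtain ⟨w, lam, mu, hw, htr⟩ := exists_trace_pow_mul_exp_eq_sum hV hB
  obtain ⟨hV0, hU0⟩ := htr 0 (by norm_num)
  obtain ⟨hV1, -⟩ := htr 1 (by norm_num)
  obtain ⟨hV2, hU2⟩ := htr 2 le_rfl
  rw [pow_one] at hV1
  rw [pow_zero, one_mul] at hV0 hU0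
  rw [hV0, hU0, hV1, hV2, hU2, ← sub_nonneg]
  simp only [← Finset.sum_sub_distrib, ← Finset.sum_add_distrib, Finset.sum_div]
  refine Finset.sum_nonneg fun i _ => Finset.sum_nonneg fun j _ => ?_
  have he : Real.exp (lam i - mu j) * Real.exp (mu j) = Real.exp (lam i) := by
    rw [← Real.exp_add, sub_add_cancel]
  have h : Real.exp (lam i) ≤ Real.exp (mu j) + (lam i - mu j) * Real.exp (mu j) +
      (lam i - mu j) ^ 2 / 2 * (Real.exp (mu j) + Real.exp (lam i)) := by
    nlinarith [mul_le_mul_of_nonneg_right (Real.exp_sub_one_sub_le (lam i - mu j))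
      (Real.exp_pos (mu j)).le]
  nlinarith [mul_le_mul_of_nonneg_left h (hw i j)]

theorem trace_exp_sub_le (hV : V.IsHermitian) (hB : B.PosSemidef) {η : ℝ} (hη : 0 ≤ η)
    (hBη : (η • B - B ^ 2).PosSemidef) :
    trace (exp (V - B)) ≤ trace (exp V) - (1 - η) * trace (B * exp V) := by
  have hsq_le : ∀ {E : Matrix ι ι ℝ}, E.PosSemidef → trace (B ^ 2 * E) ≤ η * trace (B * E) := by
    intro E hE
    have h := hBη.trace_mul_nonneg hE
    rw [sub_mul, trace_sub, smul_mul, trace_smul, smul_eq_mul] at h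
    linarith
  have hK1 := trace_mul_exp_sub_le hV hB.1
  have hK2 := trace_exp_sub_le_quadratic hV hB.1
  have hV2 := hsq_le hV.posSemidef_exp
  have hU2 := hsq_le (hV.sub hB.1).posSemidef_exp
  have hBV := hB.trace_mul_nonneg hV.posSemidef_exp
  -- `hK1` and `hsq_le` turn `hK2` into
  -- `(1 + η/2) tr e^(V-B) ≤ (1 + η/2) tr e^V - (1 - η/2) tr (B e^V)`; and `1 - η/2 ≥ (1-η)(1 + η/2)`.
  have key : (1 + η / 2) * (trace (exp (V - B)) - trace (exp V) + (1 - η) * trace (B * exp V))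
      ≤ 0 := by
    nlinarith [mul_le_mul_of_nonneg_left hK1 hη, mul_nonneg (sq_nonneg η) hBV]
  linarith [nonpos_of_mul_nonpos_right key (by positivity)]

lemma IsHermitian.trace_exp {A : Matrix ι ι ℝ} (hA : A.IsHermitian) :
    trace (NormedSpace.exp A) = ∑ i, Real.exp (hA.eigenvalues i) := by
  rw [hA.exp_eq, trace_unitary_conj hA.eigenvectorUnitary.2, trace_diagonal]

lemma IsHermitian.trace_exp_pos [Nonempty ι] {A : Matrix ι ι ℝ} (hA : A.IsHermitian) :
    0 < trace (NormedSpace.exp A) := by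
  rw [hA.trace_exp]
  exact Finset.sum_pos (fun i _ => Real.exp_pos _) Finset.univ_nonempty

lemma IsHermitian.exp_mul_eigenvalues_le_trace_exp_smul {A : Matrix ι ι ℝ} (hA : A.IsHermitian)
    (c : ℝ) (k : ι) : Real.exp (c * hA.eigenvalues k) ≤ trace (NormedSpace.exp (c • A)) := by
  have hcA : c • A = (hA.eigenvectorUnitary : Matrix ι ι ℝ) * diagonal (c • hA.eigenvalues) *
      star (hA.eigenvectorUnitary : Matrix ι ι ℝ) := by
    conv_lhs => rw [hA.eq_conj_diagonal]
    rw [diagonal_smul, mul_smul_comm, smul_mul_assoc]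
  rw [hcA, exp_unitary_conj_diagonal hA.eigenvectorUnitary.2,
    trace_unitary_conj hA.eigenvectorUnitary.2, trace_diagonal]
  exact Finset.single_le_sum (f := fun i => Real.exp ((c • hA.eigenvalues) i))
    (fun i _ => (Real.exp_pos _).le) (Finset.mem_univ k)

lemma PosSemidef.posSemidef_smul_sub_sq {M : Matrix ι ι ℝ} (hM : M.PosSemidef) {ρ : ℝ}
    (hρ : ∀ i, hM.1.eigenvalues i ≤ ρ) : (ρ • M - M ^ 2).PosSemidef := by
  set U : Matrix ι ι ℝ := (hM.1.eigenvectorUnitary : Matrix ι ι ℝ)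
  have hU : star U * U = 1 := Unitary.star_mul_self_of_mem hM.1.eigenvectorUnitary.2
  have h : ρ • M - M ^ 2 =
      U * diagonal (fun i => ρ * hM.1.eigenvalues i - hM.1.eigenvalues i ^ 2) * star U := by
    conv_lhs => rw [hM.1.eq_conj_diagonal]
    have hd : diagonal (fun i => ρ * hM.1.eigenvalues i - hM.1.eigenvalues i ^ 2) =
        ρ • diagonal hM.1.eigenvalues - diagonal hM.1.eigenvalues * (star U * U) *
          diagonal hM.1.eigenvalues := by
      rw [hU, mul_one, diagonal_mul_diagonal, ← diagonal_smul, ← diagonal_sub]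
      congr 1; ext i; simp [sq]
    rw [hd]
    simp only [sq, mul_sub, sub_mul, mul_smul_comm, smul_mul_assoc, mul_assoc]
    rfl
  rw [h]
  refine posSemidef_mul_diagonal_mul_star _ fun i => ?_
  have h0 := hM.eigenvalues_nonneg i
  rw [Pi.zero_apply]
  nlinarith [hρ i]

end Matrix

lemma le_mul_exp_neg_sum_of_le_mul_one_sub {Φ a : ℕ → ℝ} (hΦ : ∀ t, 0 ≤ Φ t)
    (h : ∀ t, Φ (t + 1) ≤ Φ t * (1 - a t)) (T : ℕ) :
    Φ T ≤ Φ 0 * Real.exp (-∑ t ∈ Finset.range T, a t) := by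
  induction T with
  | zero => simp
  | succ T ih =>
    calc Φ (T + 1) ≤ Φ T * Real.exp (-a T) := by
          refine (h T).trans (mul_le_mul_of_nonneg_left ?_ (hΦ T))
          linarith [Real.add_one_le_exp (-a T)]
      _ ≤ Φ 0 * Real.exp (-∑ t ∈ Finset.range T, a t) * Real.exp (-a T) :=
          mul_le_mul_of_nonneg_right ih (Real.exp_pos _).le
      _ = Φ 0 * Real.exp (-∑ t ∈ Finset.range (T + 1), a t) := by
          rw [mul_assoc, ← Real.exp_add, Finset.sum_range_succ, neg_add]

section MMWU

lemma isHermitian_smul_sum {ι : Type*} {M : ℕ → Matrix ι ι ℝ} (hM : ∀ t, (M t).PosSemidef)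
    (c : ℝ) (t : ℕ) : (c • ∑ i ∈ Finset.range t, M i).IsHermitian :=
  (posSemidef_sum _ fun i _ => hM i).1.smul (IsSelfAdjoint.all c)

variable {ι : Type*} [Fintype ι] [DecidableEq ι]

/-- The unnormalised weight `X'_t`; the density matrix `X_t` is `X'_t / tr X'_t`. -/
noncomputable def mmwuWeight (η ρ : ℝ) (M : ℕ → Matrix ι ι ℝ) (t : ℕ) : Matrix ι ι ℝ :=
  NormedSpace.exp ((-(η / ρ)) • ∑ i ∈ Finset.range t, M i)

variable {η ρ : ℝ} {M : ℕ → Matrix ι ι ℝ}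

lemma trace_mmwuWeight_succ_le (hρ : 0 < ρ) (hη : 0 ≤ η) (hM : ∀ t, (M t).PosSemidef)
    (hMρ : ∀ t, (ρ • M t - M t ^ 2).PosSemidef) (t : ℕ) :
    trace (mmwuWeight η ρ M (t + 1)) ≤
      trace (mmwuWeight η ρ M t) - (1 - η) * (η / ρ) * trace (M t * mmwuWeight η ρ M t) := by
  have hB : (η • ((η / ρ) • M t) - ((η / ρ) • M t) ^ 2).PosSemidef := by
    have h : η • ((η / ρ) • M t) - ((η / ρ) • M t) ^ 2 = (η / ρ) ^ 2 • (ρ • M t - M t ^ 2) := by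
      rw [smul_sub, smul_pow, smul_smul, smul_smul]
      congr 2
      field_simp
    rw [h]
    exact (hMρ t).smul (sq_nonneg _)
  have h := trace_exp_sub_le (isHermitian_smul_sum hM (-(η / ρ)) t)
    ((hM t).smul (div_nonneg hη hρ.le)) hη hB
  have hsucc : (-(η / ρ)) • ∑ i ∈ Finset.range t, M i - (η / ρ) • M t =
      (-(η / ρ)) • ∑ i ∈ Finset.range (t + 1), M i := by
    rw [Finset.sum_range_succ, smul_add, neg_smul, neg_smul, sub_eq_add_neg]
  rw [hsucc, smul_mul, trace_smul, smul_eq_mul] at h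
  unfold mmwuWeight
  linarith

theorem mmwu_regret_bound [Nonempty ι] (hρ : 0 < ρ) (hη : 0 < η) (hM : ∀ t, (M t).PosSemidef)
    (hMρ : ∀ t, (ρ • M t - M t ^ 2).PosSemidef) {T : ℕ} (hT : 0 < T)
    (hA : ((T : ℝ)⁻¹ • ∑ t ∈ Finset.range T, M t).IsHermitian) (k : ι) :
    (1 - η) * ((T : ℝ)⁻¹ * ∑ t ∈ Finset.range T,
        trace (M t * mmwuWeight η ρ M t) / trace (mmwuWeight η ρ M t)) -
      ρ * Real.log (Fintype.card ι) / (η * T) ≤ hA.eigenvalues k := by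
  set W := mmwuWeight η ρ M
  set s := fun t => trace (M t * W t) / trace (W t)
  have hW : ∀ t, 0 < trace (W t) := fun t => (isHermitian_smul_sum hM _ t).trace_exp_pos
  have hpot := le_mul_exp_neg_sum_of_le_mul_one_sub (Φ := fun t => trace (W t))
    (a := fun t => (1 - η) * (η / ρ) * s t) (fun t => (hW t).le) (fun t => by
      have h := trace_mmwuWeight_succ_le hρ hη.le hM hMρ t
      simp only [s]
      rw [mul_sub, mul_one, ← mul_div_assoc, mul_div_cancel₀ _ (hW t).ne']
      exact h) T
  have hW0 : trace (W 0) = Fintype.card ι := by simp [W, mmwuWeight]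
  have hlow := hA.exp_mul_eigenvalues_le_trace_exp_smul (-(η / ρ) * T) k
  rw [smul_smul, mul_inv_cancel_right₀ (by positivity)] at hlow
  have hlog := Real.log_le_log (Real.exp_pos _) (hlow.trans hpot)
  rw [hW0, Real.log_exp, Real.log_mul (by positivity) (Real.exp_ne_zero _), Real.log_exp,
    ← Finset.mul_sum] at hlog
  have hεT : 0 < η / ρ * T := by positivity
  calc (1 - η) * ((T : ℝ)⁻¹ * ∑ t ∈ Finset.range T, s t) - ρ * Real.log (Fintype.card ι) / (η * T)
      = ((1 - η) * (η / ρ) * ∑ t ∈ Finset.range T, s t - Real.log (Fintype.card ι)) /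
          (η / ρ * T) := by
        field_simp
    _ ≤ (η / ρ * T) * hA.eigenvalues k / (η / ρ * T) := by
        gcongr
        linarith
    _ = hA.eigenvalues k := by field_simp

end MMWU

lemma Matrix.IsHermitian.eigenvalues_le_specNorm {n : ℕ} {A : Matrix (Fin (n + 1)) (Fin (n + 1)) ℝ}
    (hA : A.IsHermitian) (k : Fin (n + 1)) : hA.eigenvalues k ≤ specNorm A := by
  have hk : hA.eigenvalues k ∈ spectrum ℝ (Matrix.toEuclideanCLM (𝕜 := ℝ) A :
      EuclideanSpace ℝ (Fin (n + 1)) →L[ℝ] EuclideanSpace ℝ (Fin (n + 1))) := by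
    rw [AlgEquiv.spectrum_eq]
    exact hA.eigenvalues_mem_spectrum_real k
  exact (le_abs_self _).trans (spectrum.norm_le_norm_of_mem hk)

lemma le_lambdaMin {n : ℕ} {A : Matrix (Fin (n + 1)) (Fin (n + 1)) ℝ} (hA : A.IsHermitian) {x : ℝ}
    (h : ∀ k, x ≤ hA.eigenvalues k) : x ≤ lambdaMin A := by
  rw [lambdaMin, dif_pos hA]
  exact Finset.le_inf' _ _ fun k _ => h k

lemma Matrix.sum_sum_mul_eq_trace_mul {ι : Type*} [Fintype ι] {A B : Matrix ι ι ℝ}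
    (hB : B.IsHermitian) : ∑ i, ∑ j, A i j * B i j = trace (A * B) := by
  have hBt : Bᵀ = B := IsSymm.eq hB
  calc ∑ i, ∑ j, A i j * B i j = trace (A * Bᵀ) := sum_hadamard_eq A B
    _ = trace (A * B) := by rw [hBt]

/-- Regret bound for MMWU with PSD feedback matrices: there is an
absolute constant `c > 0` such that for PSD feedback matrices `M_t` with
`‖M_t‖ ≤ ρ` and density matrices `X_t ∝ exp(−(η/ρ) ∑_{i<t} M_i)`,
`λ_min((1/T) ∑_t M_t) ≥ c·((1−η)·(1/T)∑_t ⟨M_t, X_t⟩ − ρ log n/(η T))`. -/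
theorem stmt_17 :
    ∃ c : ℝ, 0 < c ∧
    ∀ (n T : ℕ), 0 < T →
    ∀ ρ η : ℝ, 0 < ρ → 0 < η → η < 1 →
    ∀ M : ℕ → Matrix (Fin (n + 1)) (Fin (n + 1)) ℝ,
      (∀ t, (M t).PosSemidef) →
      (∀ t, specNorm (M t) ≤ ρ) →
      let Xp : ℕ → Matrix (Fin (n + 1)) (Fin (n + 1)) ℝ := fun t =>
        NormedSpace.exp ((-(η / ρ)) • ∑ i ∈ Finset.range t, M i)
      let X : ℕ → Matrix (Fin (n + 1)) (Fin (n + 1)) ℝ := fun t =>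
        (Matrix.trace (Xp t))⁻¹ • Xp t
      c * ((1 - η) * ((T : ℝ)⁻¹ *
            ∑ t ∈ Finset.range T, ∑ i, ∑ j, (M t) i j * (X t) i j)
          - ρ * Real.log (n + 1) / (η * T))
        ≤ lambdaMin ((T : ℝ)⁻¹ • ∑ t ∈ Finset.range T, M t) := by
  refine ⟨1, one_pos, fun n T hT ρ η hρ hη _ M hM hMρ => ?_⟩
  intro Xp X
  have hA := isHermitian_smul_sum hM (T : ℝ)⁻¹ T
  have hMsq : ∀ t, (ρ • M t - M t ^ 2).PosSemidef := fun t =>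
    (hM t).posSemidef_smul_sub_sq fun i => ((hM t).1.eigenvalues_le_specNorm i).trans (hMρ t)
  have hpair : ∀ t, ∑ i, ∑ j, M t i j * X t i j =
      trace (M t * Xp t) / trace (Xp t) := fun t => by
    rw [sum_sum_mul_eq_trace_mul ((isHermitian_smul_sum hM _ t).posSemidef_exp.1.smul
      (IsSelfAdjoint.all _)), mul_smul_comm, trace_smul, smul_eq_mul, inv_mul_eq_div]
  rw [one_mul]
  refine le_lambdaMin hA fun k => ?_
  simp only [hpair]
  have h := mmwu_regret_bound hρ hη hM hMsq hT hA k
  rw [Fintype.card_fin, Nat.cast_add, Nat.cast_one] at h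
  exact h
end
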